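/- arXiv:2408.00951 — 4 statements merged into one kernel-verified Lean document; each statement's English description precedes it below -/
import Mathlib

section
/- Let $H \in (\frac12, 1)$ and define the kernel $\phi_H(y) := H(2H-1)|y|^{2H-2}$ for $y \neq 0$. There exists a constant $C > 0$ depending only on $H$ such that for every $\vartheta \in [0, H]$, every $\lambda > 0$ and all real $s, t$ with $0 < s \le t$, $$\lambda^{2\vartheta} \int_s^t \int_s^t e^{-\lambda(t-\mu)} e^{-\lambda(t-\nu)} \, \phi_H(\mu-\nu) \, d\mu \, d\nu \le C\,(t-s)^{2(H-\vartheta)}.$$ -/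
open Real MeasureTheory intervalIntegral Set


lemma aux_abs_rpow_intInt {r : ℝ} (hr : -1 < r) (d a b : ℝ) :
    IntervalIntegrable (fun x => |x - d| ^ r) volume a b := by
  have h : ∀ c : ℝ, 0 ≤ c → IntervalIntegrable (fun x : ℝ => |x| ^ r) volume 0 c := by
    intro c hc
    rw [intervalIntegrable_iff_integrableOn_Ioc_of_le hc]
    have h0 : IntegrableOn (fun x : ℝ => x ^ r) (Ioc 0 c) := by
      rw [← intervalIntegrable_iff_integrableOn_Ioc_of_le hc]
      exact intervalIntegrable_rpow' hr
    exact h0.congr_fun (fun x hx => by rw [abs_of_pos hx.1]) measurableSet_Ioc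
  have h' : ∀ c : ℝ, IntervalIntegrable (fun x : ℝ => |x| ^ r) volume 0 c := by
    intro c
    rcases le_total 0 c with hc | hc
    · exact h c hc
    · rw [IntervalIntegrable.iff_comp_neg]
      simp only [abs_neg, neg_zero]
      exact h (-c) (by linarith)
  have base : IntervalIntegrable (fun x : ℝ => |x| ^ r) volume (a - d) (b - d) :=
    (h' (a - d)).symm.trans (h' (b - d))
  have := base.comp_sub_right d
  simpa using this

lemma aux_int_abs_rpow {r : ℝ} (hr : -1 < r) {x : ℝ} (hx : 0 ≤ x) :
    (∫ u in (0:ℝ)..x, |u| ^ r) = x ^ (r + 1) / (r + 1) := by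
  have h1 : (∫ u in (0:ℝ)..x, |u| ^ r) = ∫ u in (0:ℝ)..x, u ^ r := by
    apply integral_congr
    intro u hu
    rw [uIcc_of_le hx] at hu
    show |u| ^ r = u ^ r
    rw [abs_of_nonneg hu.1]
  rw [h1, integral_rpow (Or.inl hr), Real.zero_rpow (by linarith), sub_zero]

lemma aux_gamma_tail {r lam T : ℝ} (hr : -1 < r) (hlam : 0 < lam) (hT : 0 ≤ T) :
    (∫ u in (0:ℝ)..T, Real.exp (-lam * u) * |u| ^ r) ≤
      Real.Gamma (r + 1) * lam ^ (-(r + 1)) := by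
  have hint : IntegrableOn (fun u : ℝ => Real.exp (-lam * u) * |u| ^ r) (Ioi 0) := by
    have h := integrableOn_rpow_mul_exp_neg_mul_rpow hr one_pos hlam
    exact h.congr_fun (fun x hx => by
      beta_reduce; rw [Real.rpow_one, abs_of_pos hx, mul_comm]) measurableSet_Ioi
  have hval : (∫ u in Ioi (0:ℝ), Real.exp (-lam * u) * |u| ^ r)
      = Real.Gamma (r + 1) * lam ^ (-(r + 1)) := by
    have h := Real.integral_rpow_mul_exp_neg_mul_Ioi (a := r + 1) (r := lam)
      (by linarith) hlam
    rw [show (∫ u in Ioi (0:ℝ), Real.exp (-lam * u) * |u| ^ r)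
        = ∫ t : ℝ in Ioi 0, t ^ (r + 1 - 1) * Real.exp (-(lam * t)) from
      setIntegral_congr_fun measurableSet_Ioi (fun x hx => by
        rw [add_sub_cancel_right, abs_of_pos hx, neg_mul, mul_comm]), h,
      one_div, ← Real.rpow_neg_one lam, ← Real.rpow_mul hlam.le,
      show (-1) * (r + 1) = -(r + 1) by ring, mul_comm]
  calc (∫ u in (0:ℝ)..T, Real.exp (-lam * u) * |u| ^ r)
      = ∫ u in Ioc (0:ℝ) T, Real.exp (-lam * u) * |u| ^ r := integral_of_le hT
    _ ≤ ∫ u in Ioi (0:ℝ), Real.exp (-lam * u) * |u| ^ r := by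
        apply setIntegral_mono_set hint
        · filter_upwards with x using by positivity
        · exact HasSubset.Subset.eventuallyLE Ioc_subset_Ioi_self
    _ = _ := hval

lemma aux_exp_tail {lam T : ℝ} (hlam : 0 < lam) (hT : 0 ≤ T) :
    (∫ u in (0:ℝ)..T, Real.exp (-lam * u)) ≤ lam⁻¹ := by
  have h := aux_gamma_tail (r := 0) (by norm_num) hlam hT
  simpa [Real.Gamma_one, Real.rpow_neg_one] using h

lemma aux_pow_le_max {x e : ℝ} (hx : 0 ≤ x) (he0 : 0 ≤ e) (he1 : e ≤ 1) :
    x ^ e ≤ max 1 x := by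
  rcases le_total x 1 with h | h
  · exact le_max_of_le_left (Real.rpow_le_one hx h he0)
  · calc x ^ e ≤ x ^ (1 : ℝ) := Real.rpow_le_rpow_of_exponent_le h he1
      _ = x := Real.rpow_one x
      _ ≤ max 1 x := le_max_right _ _

lemma aux_J {p lam c a : ℝ} (hp : -1 < p) (hp0 : p < 0) (hc : 0 ≤ c)
    (hlam : 0 < lam) (ha : 0 ≤ a) :
    (∫ w in (0:ℝ)..a, Real.exp (-lam * w) * (c * |w - a| ^ p)) ≤
      c * 2 ^ (-p) * a ^ p / lam + c / (p + 1) * 2 ^ (-(p + 1)) * a ^ (p + 1) := by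
  rcases ha.eq_or_lt with rfl | ha'
  · rw [intervalIntegral.integral_same, Real.zero_rpow (ne_of_lt hp0),
      Real.zero_rpow (ne_of_gt (by linarith : (0:ℝ) < p + 1))]
    simp
  · have hInt : ∀ u v : ℝ, IntervalIntegrable
        (fun w => Real.exp (-lam * w) * (c * |w - a| ^ p)) volume u v := by
      intro u v
      exact ((aux_abs_rpow_intInt hp a u v).const_mul c).continuousOn_mul
        (Continuous.continuousOn (by fun_prop))
    have hsplit : (∫ w in (0:ℝ)..a, Real.exp (-lam * w) * (c * |w - a| ^ p))
        = (∫ w in (0:ℝ)..(a/2), Real.exp (-lam * w) * (c * |w - a| ^ p))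
          + ∫ w in (a/2)..a, Real.exp (-lam * w) * (c * |w - a| ^ p) :=
      (integral_add_adjacent_intervals (hInt 0 (a/2)) (hInt (a/2) a)).symm
    have hpiece1 : (∫ w in (0:ℝ)..(a/2), Real.exp (-lam * w) * (c * |w - a| ^ p))
        ≤ c * (a/2) ^ p * lam⁻¹ := by
      have hmono : (∫ w in (0:ℝ)..(a/2), Real.exp (-lam * w) * (c * |w - a| ^ p))
          ≤ ∫ w in (0:ℝ)..(a/2), c * (a/2) ^ p * Real.exp (-lam * w) := by
        apply integral_mono_on (by linarith) (hInt 0 (a/2))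
          ((continuous_const.mul (by fun_prop)).intervalIntegrable _ _)
        intro w hw
        rw [mul_comm]
        apply mul_le_mul_of_nonneg_right _ (Real.exp_nonneg _)
        apply mul_le_mul_of_nonneg_left _ hc
        rw [abs_of_nonpos (by cases hw; linarith), neg_sub]
        exact Real.rpow_le_rpow_of_nonpos (by linarith) (by cases hw; linarith) hp0.le
      rw [intervalIntegral.integral_const_mul] at hmono
      calc _ ≤ _ := hmono
        _ ≤ c * (a/2) ^ p * lam⁻¹ := by
            apply mul_le_mul_of_nonneg_left (aux_exp_tail hlam (by linarith))
            positivity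
    have hpiece2 : (∫ w in (a/2)..a, Real.exp (-lam * w) * (c * |w - a| ^ p))
        ≤ c / (p + 1) * (a/2) ^ (p + 1) := by
      have hmono : (∫ w in (a/2)..a, Real.exp (-lam * w) * (c * |w - a| ^ p))
          ≤ ∫ w in (a/2)..a, c * |w - a| ^ p := by
        apply integral_mono_on (by linarith) (hInt (a/2) a)
          ((aux_abs_rpow_intInt hp a _ _).const_mul c)
        intro w hw
        apply mul_le_of_le_one_left (by positivity)
        apply Real.exp_le_one_iff.mpr
        simp only [neg_mul, neg_nonpos]
        obtain ⟨hw1, hw2⟩ := hw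
        exact mul_nonneg hlam.le (by linarith)
      have hneg := integral_comp_neg (a := 0) (b := a/2) (fun x => |x| ^ p)
      simp only [abs_neg, neg_zero] at hneg
      have heval : (∫ w in (a/2)..a, |w - a| ^ p) = (a/2) ^ (p+1) / (p+1) :=
        calc (∫ w in (a/2)..a, |w - a| ^ p)
            = ∫ x in (a/2 - a)..(a - a), |x| ^ p :=
              integral_comp_sub_right (fun x => |x| ^ p) a
          _ = ∫ x in (-(a/2))..(0:ℝ), |x| ^ p := by
              rw [show a/2 - a = -(a/2) by ring, sub_self]
          _ = ∫ x in (0:ℝ)..(a/2), |x| ^ p := hneg.symm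
          _ = (a/2) ^ (p+1) / (p+1) := aux_int_abs_rpow hp (by linarith)
      calc _ ≤ _ := hmono
        _ = c * ((a/2) ^ (p+1) / (p+1)) := by
            rw [intervalIntegral.integral_const_mul, heval]
        _ = c / (p + 1) * (a/2) ^ (p + 1) := by ring
    have h2p : ∀ e : ℝ, (a/2) ^ e = 2 ^ (-e) * a ^ e := by
      intro e
      rw [Real.div_rpow ha (by norm_num), Real.rpow_neg (by norm_num)]
      ring
    rw [hsplit]
    calc _ ≤ c * (a/2) ^ p * lam⁻¹ + c / (p + 1) * (a/2) ^ (p + 1) :=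
          add_le_add hpiece1 hpiece2
      _ = c * 2 ^ (-p) * a ^ p / lam + c / (p + 1) * 2 ^ (-(p + 1)) * a ^ (p + 1) := by
          rw [h2p p, h2p (p+1)]; ring




open Real MeasureTheory intervalIntegral

/-- Regularity estimate for the scalar semigroup kernel against the fBm covariance density
`φ_H(y) = H(2H-1)|y|^{2H-2}`: there is `C > 0` depending only on `H` such that for every
`ϑ ∈ [0, H]`, every `λ > 0` and all `0 < s ≤ t`,
`λ^{2ϑ} ∫_s^t ∫_s^t e^{-λ(t-μ)} e^{-λ(t-ν)} φ_H(μ-ν) dμ dν ≤ C (t-s)^{2(H-ϑ)}`. -/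
theorem stmt_1 (H : ℝ) (hH : H ∈ Set.Ioo (1/2 : ℝ) 1) :
    ∃ C : ℝ, 0 < C ∧ ∀ ϑ ∈ Set.Icc (0 : ℝ) H, ∀ lam : ℝ, 0 < lam →
      ∀ s t : ℝ, 0 < s → s ≤ t →
        lam ^ (2 * ϑ) *
            ∫ μ in s..t, ∫ ν in s..t,
              Real.exp (-lam * (t - μ)) * Real.exp (-lam * (t - ν)) *
                (H * (2 * H - 1) * |μ - ν| ^ (2 * H - 2))
          ≤ C * (t - s) ^ (2 * (H - ϑ)) := by
  obtain ⟨hH1, hH2⟩ := hH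
  have hH0 : 0 < H := by linarith
  have hHne : H ≠ 0 := ne_of_gt hH0
  set c : ℝ := H * (2 * H - 1) with hc_def
  set p : ℝ := 2 * H - 2 with hp_def
  set q : ℝ := 2 * H - 1 with hq_def
  have hp1 : -1 < p := by rw [hp_def]; linarith
  have hp0 : p < 0 := by rw [hp_def]; linarith
  have hq0 : 0 < q := by rw [hq_def]; linarith
  have hq1 : -1 < q := by linarith
  have hc0 : 0 < c := by rw [hc_def]; nlinarith
  have hpq : p + 1 = q := by rw [hp_def, hq_def]; ring
  have hq2H : q + 1 = 2 * H := by rw [hq_def]; ring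
  have hGq : 0 < Real.Gamma q := Real.Gamma_pos_of_pos hq0
  have hG2H : 0 < Real.Gamma (2 * H) := Real.Gamma_pos_of_pos (by linarith)
  have h2p : (0:ℝ) < 2 ^ (-p) := Real.rpow_pos_of_pos two_pos _
  have h2q : (0:ℝ) < 2 ^ (-q) := Real.rpow_pos_of_pos two_pos _
  set CB : ℝ := c * Real.Gamma q + c * 2 ^ (-p) * Real.Gamma q
      + c / q * 2 ^ (-q) * Real.Gamma (2 * H) with hCB_def
  have hCB0 : 0 < CB := by
    have h3 : 0 < c / q := div_pos hc0 hq0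
    rw [hCB_def]
    positivity
  have hCA0 : (0:ℝ) < 2 * H := by linarith
  have hmax1 : (0:ℝ) < max 1 CB := lt_of_lt_of_le one_pos (le_max_left _ _)
  have hmax2 : (0:ℝ) < max 1 (2 * H) := lt_of_lt_of_le one_pos (le_max_left _ _)
  refine ⟨max 1 CB * max 1 (2 * H), mul_pos hmax1 hmax2, ?_⟩
  rintro ϑ ⟨hϑ0, hϑH⟩ lam hlam s t hs hst
  rcases hst.eq_or_lt with rfl | hst'
  · simp only [intervalIntegral.integral_same, mul_zero]
    exact mul_nonneg (mul_pos hmax1 hmax2).le (Real.rpow_nonneg (by simp) _)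
  have hts0 : 0 < t - s := by linarith
  -- basic integrability of the inner kernel
  have h_inner_int : ∀ (μ u v : ℝ), IntervalIntegrable
      (fun ν => Real.exp (-lam * (t - ν)) * (c * |μ - ν| ^ p)) volume u v := by
    intro μ u v
    have he : (fun ν => Real.exp (-lam * (t - ν)) * (c * |μ - ν| ^ p))
        = fun ν => Real.exp (-lam * (t - ν)) * (c * |ν - μ| ^ p) := by
      funext ν; rw [abs_sub_comm]
    rw [he]
    exact ((aux_abs_rpow_intInt hp1 μ u v).const_mul c).continuousOn_mul
      (Continuous.continuousOn (by fun_prop))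
  set innr : ℝ → ℝ :=
    fun μ => ∫ ν in s..t, Real.exp (-lam * (t - ν)) * (c * |μ - ν| ^ p) with hinnr_def
  set f : ℝ → ℝ :=
    fun μ => ∫ ν in s..t, Real.exp (-lam * (t - μ)) * Real.exp (-lam * (t - ν)) *
      (c * |μ - ν| ^ p) with hf_def
  have h_f_eq : ∀ μ : ℝ, f μ = Real.exp (-lam * (t - μ)) * innr μ := by
    intro μ
    simp only [hf_def, hinnr_def]
    rw [← intervalIntegral.integral_const_mul]
    exact integral_congr fun ν _ => by ring
  have h_f_nonneg : ∀ μ : ℝ, 0 ≤ f μ := by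
    intro μ
    simp only [hf_def]
    exact integral_nonneg hst fun ν _ => by positivity
  have h_innr_nonneg : ∀ μ : ℝ, 0 ≤ innr μ := by
    intro μ
    simp only [hinnr_def]
    exact integral_nonneg hst fun ν _ => by positivity
  have h_exp_le1 : ∀ μ : ℝ, μ ≤ t → Real.exp (-lam * (t - μ)) ≤ 1 := by
    intro μ hμ
    apply Real.exp_le_one_iff.mpr
    rw [neg_mul, neg_nonpos]
    exact mul_nonneg hlam.le (by linarith)
  have habs_int : ∀ (μ u v : ℝ), IntervalIntegrable (fun ν => |μ - ν| ^ p) volume u v := by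
    intro μ u v
    have he : (fun ν : ℝ => |μ - ν| ^ p) = fun ν => |ν - μ| ^ p := by
      funext ν; rw [abs_sub_comm]
    rw [he]
    exact aux_abs_rpow_intInt hp1 μ u v
  -- bound A for the inner integral
  have h_innr_le_M : ∀ μ ∈ Icc s t, innr μ ≤ 2 * (c / q) * (t - s) ^ q := by
    rintro μ ⟨hμ1, hμ2⟩
    have h1 : innr μ ≤ ∫ ν in s..t, c * |μ - ν| ^ p := by
      simp only [hinnr_def]
      apply integral_mono_on hst (h_inner_int μ s t) ((habs_int μ s t).const_mul c)
      intro ν hν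
      exact mul_le_of_le_one_left (by positivity) (h_exp_le1 ν hν.2)
    have h2 : (∫ ν in s..t, |μ - ν| ^ p) = (μ - s) ^ q / q + (t - μ) ^ q / q := by
      rw [← integral_add_adjacent_intervals (habs_int μ s μ) (habs_int μ μ t)]
      congr 1
      · calc (∫ ν in s..μ, |μ - ν| ^ p)
            = ∫ u in (μ - μ)..(μ - s), |u| ^ p :=
              integral_comp_sub_left (fun u => |u| ^ p) μ
          _ = ∫ u in (0:ℝ)..(μ - s), |u| ^ p := by rw [sub_self]
          _ = (μ - s) ^ (p + 1) / (p + 1) := aux_int_abs_rpow hp1 (by linarith)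
          _ = (μ - s) ^ q / q := by rw [hpq]
      · calc (∫ ν in μ..t, |μ - ν| ^ p)
            = ∫ ν in μ..t, |ν - μ| ^ p := integral_congr fun ν _ => by rw [abs_sub_comm]
          _ = ∫ u in (μ - μ)..(t - μ), |u| ^ p :=
              integral_comp_sub_right (fun u => |u| ^ p) μ
          _ = ∫ u in (0:ℝ)..(t - μ), |u| ^ p := by rw [sub_self]
          _ = (t - μ) ^ (p + 1) / (p + 1) := aux_int_abs_rpow hp1 (by linarith)
          _ = (t - μ) ^ q / q := by rw [hpq]
    calc innr μ ≤ ∫ ν in s..t, c * |μ - ν| ^ p := h1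
      _ = c * ((μ - s) ^ q / q + (t - μ) ^ q / q) := by
          rw [intervalIntegral.integral_const_mul, h2]
      _ ≤ c * ((t - s) ^ q / q + (t - s) ^ q / q) := by
          apply mul_le_mul_of_nonneg_left _ hc0.le
          have e1 : (μ - s) ^ q ≤ (t - s) ^ q :=
            Real.rpow_le_rpow (by linarith) (by linarith) hq0.le
          have e2 : (t - μ) ^ q ≤ (t - s) ^ q :=
            Real.rpow_le_rpow (by linarith) (by linarith) hq0.le
          exact add_le_add ((div_le_div_iff_of_pos_right hq0).mpr e1) ((div_le_div_iff_of_pos_right hq0).mpr e2)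
      _ = 2 * (c / q) * (t - s) ^ q := by ring
  have h_f_le_M : ∀ μ ∈ Icc s t, f μ ≤ 2 * (c / q) * (t - s) ^ q := by
    intro μ hμ
    calc f μ = Real.exp (-lam * (t - μ)) * innr μ := h_f_eq μ
      _ ≤ 1 * (2 * (c / q) * (t - s) ^ q) :=
          mul_le_mul (h_exp_le1 μ hμ.2) (h_innr_le_M μ hμ) (h_innr_nonneg μ) zero_le_one
      _ = 2 * (c / q) * (t - s) ^ q := one_mul _
  -- measurability of f on (s,t]
  have h_f_meas : AEStronglyMeasurable f (volume.restrict (Ioc s t)) := by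
    have hfeq : f = fun μ => ∫ ν in Ioc s t,
        (fun z : ℝ × ℝ => Real.exp (-lam * (t - z.1)) * Real.exp (-lam * (t - z.2)) *
          (c * |z.1 - z.2| ^ p)) (μ, ν) := by
      funext μ
      simp only [hf_def]
      rw [intervalIntegral.integral_of_le hst]
    rw [hfeq]
    have hmeas : Measurable (fun z : ℝ × ℝ => Real.exp (-lam * (t - z.1)) *
        Real.exp (-lam * (t - z.2)) * (c * |z.1 - z.2| ^ p)) := by
      apply Measurable.mul
      · exact Continuous.measurable (by fun_prop)
      · exact (((measurable_fst.sub measurable_snd).abs.pow measurable_const).const_mul c)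
    exact MeasureTheory.AEStronglyMeasurable.integral_prod_right'
      (ν := volume.restrict (Ioc s t)) hmeas.aestronglyMeasurable
  have h_f_int : IntervalIntegrable f volume s t := by
    rw [intervalIntegrable_iff_integrableOn_Ioc_of_le hst]
    apply Integrable.mono' (g := fun _ => 2 * (c / q) * (t - s) ^ q)
      (integrableOn_const measure_Ioc_lt_top.ne) h_f_meas
    filter_upwards [ae_restrict_mem measurableSet_Ioc] with μ hμ
    rw [Real.norm_eq_abs, abs_of_nonneg (h_f_nonneg μ)]
    exact h_f_le_M μ ⟨hμ.1.le, hμ.2⟩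
  -- Bound A
  have hpow2H : (t - s) ^ q * (t - s) = (t - s) ^ (2 * H) := by
    rw [← Real.rpow_add_one (ne_of_gt hts0), hq2H]
  have hcq : c / q = H := by
    rw [hc_def, hq_def]
    field_simp
    exact div_self (ne_of_gt (by linarith))
  have hA : (∫ μ in s..t, f μ) ≤ 2 * H * (t - s) ^ (2 * H) := by
    calc (∫ μ in s..t, f μ) ≤ ∫ _ in s..t, 2 * (c / q) * (t - s) ^ q :=
        integral_mono_on hst h_f_int intervalIntegrable_const h_f_le_M
      _ = (t - s) * (2 * (c / q) * (t - s) ^ q) := by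
          rw [intervalIntegral.integral_const, smul_eq_mul]
      _ = 2 * (c / q) * ((t - s) ^ q * (t - s)) := by ring
      _ = 2 * H * (t - s) ^ (2 * H) := by rw [hcq, hpow2H]
  -- pointwise bound B for the inner integral
  have h_exp_split : ∀ μ ν : ℝ,
      Real.exp (-lam * (t - μ)) * Real.exp (-lam * (μ - ν)) = Real.exp (-lam * (t - ν)) := by
    intro μ ν
    rw [← Real.exp_add]
    congr 1
    ring
  have h_innr_le_B : ∀ μ ∈ Icc s t, innr μ ≤
      c * Real.Gamma q * lam ^ (-q) + c * 2 ^ (-p) / lam * |μ - t| ^ p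
        + c / q * 2 ^ (-q) * |μ - t| ^ q := by
    rintro μ ⟨hμ1, hμ2⟩
    have habs_t : |μ - t| = t - μ := by
      rw [abs_sub_comm]
      exact abs_of_nonneg (by linarith)
    have hsplit : innr μ = (∫ ν in s..μ, Real.exp (-lam * (t - ν)) * (c * |μ - ν| ^ p))
        + ∫ ν in μ..t, Real.exp (-lam * (t - ν)) * (c * |μ - ν| ^ p) := by
      simp only [hinnr_def]
      exact (integral_add_adjacent_intervals (h_inner_int μ s μ) (h_inner_int μ μ t)).symm
    have hminus : (∫ ν in s..μ, Real.exp (-lam * (t - ν)) * (c * |μ - ν| ^ p))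
        ≤ c * Real.Gamma q * lam ^ (-q) := by
      have e1 : (∫ ν in s..μ, Real.exp (-lam * (t - ν)) * (c * |μ - ν| ^ p))
          = Real.exp (-lam * (t - μ)) *
            ∫ ν in s..μ, Real.exp (-lam * (μ - ν)) * (c * |μ - ν| ^ p) := by
        rw [← intervalIntegral.integral_const_mul]
        apply integral_congr
        intro ν _
        dsimp only
        rw [← h_exp_split μ ν]
        ring
      have e2 : (∫ ν in s..μ, Real.exp (-lam * (μ - ν)) * (c * |μ - ν| ^ p))
          = ∫ u in (0:ℝ)..(μ - s), Real.exp (-lam * u) * (c * |u| ^ p) :=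
        calc (∫ ν in s..μ, Real.exp (-lam * (μ - ν)) * (c * |μ - ν| ^ p))
            = ∫ u in (μ - μ)..(μ - s), Real.exp (-lam * u) * (c * |u| ^ p) :=
              integral_comp_sub_left (fun u => Real.exp (-lam * u) * (c * |u| ^ p)) μ
          _ = _ := by rw [sub_self]
      have e3 : (∫ u in (0:ℝ)..(μ - s), Real.exp (-lam * u) * (c * |u| ^ p))
          = c * ∫ u in (0:ℝ)..(μ - s), Real.exp (-lam * u) * |u| ^ p := by
        rw [← intervalIntegral.integral_const_mul]
        exact integral_congr fun u _ => by ring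
      have e4 := aux_gamma_tail hp1 hlam (show (0:ℝ) ≤ μ - s by linarith)
      have e5 : 0 ≤ ∫ u in (0:ℝ)..(μ - s), Real.exp (-lam * u) * |u| ^ p :=
        integral_nonneg (by linarith) fun u _ => by positivity
      rw [e1, e2, e3]
      calc Real.exp (-lam * (t - μ)) *
            (c * ∫ u in (0:ℝ)..(μ - s), Real.exp (-lam * u) * |u| ^ p)
          ≤ 1 * (c * (Real.Gamma (p + 1) * lam ^ (-(p + 1)))) := by
            apply mul_le_mul (h_exp_le1 μ hμ2) (mul_le_mul_of_nonneg_left e4 hc0.le)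
              (mul_nonneg hc0.le e5) zero_le_one
        _ = c * Real.Gamma q * lam ^ (-q) := by rw [hpq]; ring
    have hplus : (∫ ν in μ..t, Real.exp (-lam * (t - ν)) * (c * |μ - ν| ^ p))
        ≤ c * 2 ^ (-p) * (t - μ) ^ p / lam + c / (p + 1) * 2 ^ (-(p + 1)) * (t - μ) ^ (p + 1) := by
      have e1 : (∫ ν in μ..t, Real.exp (-lam * (t - ν)) * (c * |μ - ν| ^ p))
          = ∫ w in (0:ℝ)..(t - μ), Real.exp (-lam * w) * (c * |w - (t - μ)| ^ p) :=
        calc (∫ ν in μ..t, Real.exp (-lam * (t - ν)) * (c * |μ - ν| ^ p))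
            = ∫ ν in μ..t, Real.exp (-lam * (t - ν)) * (c * |t - ν - (t - μ)| ^ p) :=
              integral_congr fun ν _ => by
                try dsimp only
                rw [show t - ν - (t - μ) = μ - ν + 0 from by ring, add_zero]
          _ = ∫ w in (t - t)..(t - μ), Real.exp (-lam * w) * (c * |w - (t - μ)| ^ p) :=
              integral_comp_sub_left (fun w => Real.exp (-lam * w) * (c * |w - (t - μ)| ^ p)) t
          _ = _ := by rw [sub_self]
      rw [e1]
      exact aux_J hp1 hp0 hc0.le hlam (by linarith)
    rw [hsplit, habs_t]
    calc _ ≤ (c * Real.Gamma q * lam ^ (-q)) +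
          (c * 2 ^ (-p) * (t - μ) ^ p / lam + c / (p + 1) * 2 ^ (-(p + 1)) * (t - μ) ^ (p + 1)) :=
        add_le_add hminus hplus
      _ = _ := by rw [hpq]; ring
  -- integral bound B
  have hsub : ∀ r : ℝ, -1 < r → (∫ μ in s..t, Real.exp (-lam * (t - μ)) * |μ - t| ^ r)
      ≤ Real.Gamma (r + 1) * lam ^ (-(r + 1)) := by
    intro r hr
    calc (∫ μ in s..t, Real.exp (-lam * (t - μ)) * |μ - t| ^ r)
        = ∫ μ in s..t, Real.exp (-lam * (t - μ)) * |t - μ| ^ r :=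
          integral_congr fun μ _ => by rw [abs_sub_comm]
      _ = ∫ w in (t - t)..(t - s), Real.exp (-lam * w) * |w| ^ r :=
          integral_comp_sub_left (fun w => Real.exp (-lam * w) * |w| ^ r) t
      _ = ∫ w in (0:ℝ)..(t - s), Real.exp (-lam * w) * |w| ^ r := by rw [sub_self]
      _ ≤ Real.Gamma (r + 1) * lam ^ (-(r + 1)) := aux_gamma_tail hr hlam hts0.le
  have hexpint : (∫ μ in s..t, Real.exp (-lam * (t - μ))) ≤ lam⁻¹ :=
    calc (∫ μ in s..t, Real.exp (-lam * (t - μ)))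
        = ∫ w in (t - t)..(t - s), Real.exp (-lam * w) :=
          integral_comp_sub_left (fun w => Real.exp (-lam * w)) t
      _ = ∫ w in (0:ℝ)..(t - s), Real.exp (-lam * w) := by rw [sub_self]
      _ ≤ lam⁻¹ := aux_exp_tail hlam hts0.le
  have hpow1 : lam ^ (-q) * lam⁻¹ = lam ^ (-(2 * H)) := by
    rw [← Real.rpow_neg_one lam, ← Real.rpow_add hlam,
      show -q + -1 = -(q + 1) from by ring, hq2H]
  have hK1 : (0:ℝ) ≤ c * Real.Gamma q * lam ^ (-q) := by positivity
  have hK2 : (0:ℝ) ≤ c * 2 ^ (-p) / lam := by positivity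
  have hK3 : (0:ℝ) ≤ c / q * 2 ^ (-q) := by positivity
  have hgi1 : IntervalIntegrable
      (fun μ => c * Real.Gamma q * lam ^ (-q) * Real.exp (-lam * (t - μ))) volume s t :=
    Continuous.intervalIntegrable (by fun_prop) _ _
  have hgi2 : IntervalIntegrable
      (fun μ => c * 2 ^ (-p) / lam * (Real.exp (-lam * (t - μ)) * |μ - t| ^ p)) volume s t :=
    ((aux_abs_rpow_intInt hp1 t s t).continuousOn_mul
      (Continuous.continuousOn (by fun_prop))).const_mul _
  have hgi3 : IntervalIntegrable
      (fun μ => c / q * 2 ^ (-q) * (Real.exp (-lam * (t - μ)) * |μ - t| ^ q)) volume s t :=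
    ((aux_abs_rpow_intInt hq1 t s t).continuousOn_mul
      (Continuous.continuousOn (by fun_prop))).const_mul _
  have hB : (∫ μ in s..t, f μ) ≤ CB * lam ^ (-(2 * H)) := by
    have step1 : (∫ μ in s..t, f μ) ≤ ∫ μ in s..t,
        (c * Real.Gamma q * lam ^ (-q) * Real.exp (-lam * (t - μ))
          + c * 2 ^ (-p) / lam * (Real.exp (-lam * (t - μ)) * |μ - t| ^ p)
          + c / q * 2 ^ (-q) * (Real.exp (-lam * (t - μ)) * |μ - t| ^ q)) := by
      apply integral_mono_on hst h_f_int ((hgi1.add hgi2).add hgi3)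
      intro μ hμ
      calc f μ = Real.exp (-lam * (t - μ)) * innr μ := h_f_eq μ
        _ ≤ Real.exp (-lam * (t - μ)) *
            (c * Real.Gamma q * lam ^ (-q) + c * 2 ^ (-p) / lam * |μ - t| ^ p
              + c / q * 2 ^ (-q) * |μ - t| ^ q) :=
          mul_le_mul_of_nonneg_left (h_innr_le_B μ hμ) (Real.exp_nonneg _)
        _ = _ := by ring
    have step2 : (∫ μ in s..t,
        (c * Real.Gamma q * lam ^ (-q) * Real.exp (-lam * (t - μ))
          + c * 2 ^ (-p) / lam * (Real.exp (-lam * (t - μ)) * |μ - t| ^ p)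
          + c / q * 2 ^ (-q) * (Real.exp (-lam * (t - μ)) * |μ - t| ^ q)))
        = (∫ μ in s..t, c * Real.Gamma q * lam ^ (-q) * Real.exp (-lam * (t - μ)))
          + (∫ μ in s..t, c * 2 ^ (-p) / lam * (Real.exp (-lam * (t - μ)) * |μ - t| ^ p))
          + ∫ μ in s..t, c / q * 2 ^ (-q) * (Real.exp (-lam * (t - μ)) * |μ - t| ^ q) := by
      rw [integral_add (hgi1.add hgi2) hgi3, integral_add hgi1 hgi2]
    have t1 : (∫ μ in s..t, c * Real.Gamma q * lam ^ (-q) * Real.exp (-lam * (t - μ)))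
        ≤ c * Real.Gamma q * lam ^ (-q) * lam⁻¹ := by
      rw [intervalIntegral.integral_const_mul]
      exact mul_le_mul_of_nonneg_left hexpint hK1
    have t2 : (∫ μ in s..t, c * 2 ^ (-p) / lam * (Real.exp (-lam * (t - μ)) * |μ - t| ^ p))
        ≤ c * 2 ^ (-p) / lam * (Real.Gamma q * lam ^ (-q)) := by
      rw [intervalIntegral.integral_const_mul]
      have := hsub p hp1
      rw [hpq] at this
      exact mul_le_mul_of_nonneg_left this hK2
    have t3 : (∫ μ in s..t, c / q * 2 ^ (-q) * (Real.exp (-lam * (t - μ)) * |μ - t| ^ q))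
        ≤ c / q * 2 ^ (-q) * (Real.Gamma (2 * H) * lam ^ (-(2 * H))) := by
      rw [intervalIntegral.integral_const_mul]
      have := hsub q hq1
      rw [hq2H] at this
      exact mul_le_mul_of_nonneg_left this hK3
    calc (∫ μ in s..t, f μ) ≤ _ := step1
      _ = _ := step2
      _ ≤ c * Real.Gamma q * lam ^ (-q) * lam⁻¹ + c * 2 ^ (-p) / lam * (Real.Gamma q * lam ^ (-q))
          + c / q * 2 ^ (-q) * (Real.Gamma (2 * H) * lam ^ (-(2 * H))) :=
        add_le_add (add_le_add t1 t2) t3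
      _ = CB * lam ^ (-(2 * H)) := by
          rw [hCB_def, ← hpow1]
          have hlam_ne : lam ≠ 0 := ne_of_gt hlam
          field_simp
  -- interpolation
  have hI0 : 0 ≤ ∫ μ in s..t, f μ := integral_nonneg hst fun μ _ => h_f_nonneg μ
  rcases hI0.eq_or_lt with hI | hI
  · rw [← hI, mul_zero]
    exact mul_nonneg (mul_pos hmax1 hmax2).le (Real.rpow_nonneg hts0.le _)
  · have hr0 : 0 ≤ ϑ / H := div_nonneg hϑ0 hH0.le
    have hr1 : ϑ / H ≤ 1 := (div_le_one hH0).mpr hϑH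
    have hBq : lam ^ (2 * H) * ∫ μ in s..t, f μ ≤ CB := by
      calc lam ^ (2 * H) * ∫ μ in s..t, f μ
          ≤ lam ^ (2 * H) * (CB * lam ^ (-(2 * H))) :=
            mul_le_mul_of_nonneg_left hB (Real.rpow_nonneg hlam.le _)
        _ = CB * (lam ^ (2 * H) * lam ^ (-(2 * H))) := by ring
        _ = CB := by
            rw [← Real.rpow_add hlam, add_neg_cancel, Real.rpow_zero, mul_one]
    have key : lam ^ (2 * ϑ) * (∫ μ in s..t, f μ)
        = (lam ^ (2 * H) * ∫ μ in s..t, f μ) ^ (ϑ / H)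
          * (∫ μ in s..t, f μ) ^ (1 - ϑ / H) := by
      rw [Real.mul_rpow (Real.rpow_nonneg hlam.le _) hI0, mul_assoc,
        ← Real.rpow_add hI, show ϑ / H + (1 - ϑ / H) = 1 from by ring, Real.rpow_one,
        ← Real.rpow_mul hlam.le, show 2 * H * (ϑ / H) = 2 * ϑ from by field_simp]
    rw [key]
    have hD : ((t - s) ^ (2 * H)) ^ (1 - ϑ / H) = (t - s) ^ (2 * (H - ϑ)) := by
      rw [← Real.rpow_mul hts0.le, show 2 * H * (1 - ϑ / H) = 2 * (H - ϑ) from by field_simp]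
    calc (lam ^ (2 * H) * ∫ μ in s..t, f μ) ^ (ϑ / H) * (∫ μ in s..t, f μ) ^ (1 - ϑ / H)
        ≤ CB ^ (ϑ / H) * (2 * H * (t - s) ^ (2 * H)) ^ (1 - ϑ / H) :=
          mul_le_mul (Real.rpow_le_rpow (by positivity) hBq hr0)
            (Real.rpow_le_rpow hI0 hA (by linarith))
            (Real.rpow_nonneg hI0 _) (Real.rpow_nonneg hCB0.le _)
      _ = CB ^ (ϑ / H) * ((2 * H) ^ (1 - ϑ / H) * (t - s) ^ (2 * (H - ϑ))) := by
          rw [Real.mul_rpow hCA0.le (Real.rpow_nonneg hts0.le _), hD]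
      _ ≤ max 1 CB * (max 1 (2 * H) * (t - s) ^ (2 * (H - ϑ))) := by
          apply mul_le_mul (aux_pow_le_max hCB0.le hr0 hr1)
          · apply mul_le_mul (aux_pow_le_max hCA0.le (by linarith) (by linarith)) le_rfl
              (Real.rpow_nonneg hts0.le _) hmax2.le
          · exact mul_nonneg (Real.rpow_nonneg hCA0.le _) (Real.rpow_nonneg hts0.le _)
          · exact hmax1.le
      _ = max 1 CB * max 1 (2 * H) * (t - s) ^ (2 * (H - ϑ)) := by ring
end

section
/- Let $H \in (\frac12, 1)$, $\vartheta \in [0, H]$, and define the kernel $\phi_H(y) := H(2H-1)|y|^{2H-2}$ for $y \neq 0$. There exists a constant $C > 0$ depending only on $H$ such that for all real $s, t$ with $0 < s \le t$ and every real sequence $(c_k)_{k \ge 1}$ with $\sum_{k=1}^\infty c_k^2 < \infty$, $$\sum_{k=1}^{\infty} c_k^2 \, (k^2\pi^2)^{2\vartheta} \int_s^t \int_s^t e^{-k^2\pi^2(t-\mu)} e^{-k^2\pi^2(t-\nu)} \, \phi_H(\mu-\nu)\, d\mu\, d\nu \le C\,(t-s)^{2(H-\vartheta)} \sum_{k=1}^{\infty}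 c_k^2.$$ -/
open Real MeasureTheory intervalIntegral

open Set


lemma aux_abs_rpow_II {p : ℝ} (hp : -1 < p) (a b : ℝ) :
    IntervalIntegrable (fun x => |x| ^ p) volume a b := by
  suffices h : ∀ M : ℝ, 0 ≤ M → IntervalIntegrable (fun x : ℝ => |x| ^ p) volume (-M) M by
    have hM : 0 ≤ max |a| |b| := le_trans (abs_nonneg a) (le_max_left _ _)
    refine (h _ hM).mono_set ?_
    rw [uIcc_of_le (by linarith : -(max |a| |b|) ≤ max |a| |b|)]
    apply uIcc_subset_Icc <;> constructor
    · linarith [neg_abs_le a, le_max_left |a| |b|]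
    · exact le_trans (le_abs_self a) (le_max_left _ _)
    · linarith [neg_abs_le b, le_max_right |a| |b|]
    · exact le_trans (le_abs_self b) (le_max_right _ _)
  intro M hM
  have h0 : IntervalIntegrable (fun x : ℝ => |x| ^ p) volume 0 M := by
    rw [intervalIntegrable_iff_integrableOn_Ioc_of_le hM]
    refine ((intervalIntegrable_iff_integrableOn_Ioc_of_le hM).mp
      (intervalIntegrable_rpow' hp)).congr_fun ?_ measurableSet_Ioc
    intro x hx
    simp [abs_of_pos hx.1]
  have h1 : IntervalIntegrable (fun x : ℝ => |x| ^ p) volume (-M) 0 := by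
    have := ((IntervalIntegrable.iff_comp_neg (by simp)).mp h0)
    simp only [abs_neg, neg_zero] at this
    exact this.symm
  exact h1.trans h0

/-- For an even, a.e.-nonneg, everywhere interval integrable function `f`,
the integral of `ν ↦ f (μ - ν)` over `[s,t]` with `μ ∈ [s,t]` is at most `2 ∫_0^{t-s} f`. -/
lemma aux_shift_bound {f : ℝ → ℝ} (hev : ∀ x, f (-x) = f x) (hnn : ∀ x, 0 ≤ f x)
    (hint : ∀ a b : ℝ, IntervalIntegrable f volume a b)
    {s t μ : ℝ} (hst : s ≤ t) (hμ : μ ∈ Set.Icc s t) :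
    (∫ ν in s..t, f (μ - ν)) ≤ 2 * ∫ r in (0:ℝ)..(t - s), f r := by
  rw [intervalIntegral.integral_comp_sub_left f μ]
  have h1 : (∫ r in (μ - t)..(μ - s), f r) ≤ ∫ r in (-(t-s))..(t-s), f r := by
    refine intervalIntegral.integral_mono_interval (by linarith [hμ.1] : -(t-s) ≤ μ - t)
      (by linarith) (by linarith [hμ.2]) ?_ (hint _ _)
    exact Filter.Eventually.of_forall (fun x => hnn x)
  have h2 : (∫ r in (-(t-s))..(0:ℝ), f r) = ∫ r in (0:ℝ)..(t-s), f r := by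
    have := intervalIntegral.integral_comp_neg f (a := 0) (b := t - s)
    simp only [hev, neg_zero] at this
    rw [← this]
  have h3 : (∫ r in (-(t-s))..(t-s), f r) = 2 * ∫ r in (0:ℝ)..(t-s), f r := by
    rw [← intervalIntegral.integral_add_adjacent_intervals (hint (-(t-s)) 0) (hint 0 (t-s)), h2]
    ring
  linarith
lemma core (H lam s t : ℝ) (hH1 : 1/2 < H) (hH2 : H < 1) (hl : 1 ≤ lam) (hst : s ≤ t) :
    0 ≤ (∫ μ in s..t, ∫ ν in s..t,
        exp (-lam * (t - μ)) * exp (-lam * (t - ν)) * (H * (2*H-1) * |μ - ν| ^ (2*H-2))) ∧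
    (∫ μ in s..t, ∫ ν in s..t,
        exp (-lam * (t - μ)) * exp (-lam * (t - ν)) * (H * (2*H-1) * |μ - ν| ^ (2*H-2)))
      ≤ 2*H*(t-s) ^ (2*H) ∧
    (∫ μ in s..t, ∫ ν in s..t,
        exp (-lam * (t - μ)) * exp (-lam * (t - ν)) * (H * (2*H-1) * |μ - ν| ^ (2*H-2)))
      ≤ (H*(2*H-1) * 2 ^ (2*H+1) * Real.Gamma (2*H-1) + 1) * lam ^ (-(2*H)) := by
  have hlam0 : (0:ℝ) < lam := by linarith
  have hK : (0:ℝ) < H * (2*H-1) := by nlinarith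
  have hp : (-1:ℝ) < 2*H-2 := by linarith
  have hp0 : 2*H - 1 ≠ 0 := by linarith
  have ha0 : (0:ℝ) ≤ t - s := by linarith
  set K := H * (2*H-1) with hKdef
  set G : ℝ → ℝ → ℝ := fun μ ν =>
    exp (-lam * (t - μ)) * exp (-lam * (t - ν)) * (K * |μ - ν| ^ (2*H-2)) with hGdef
  have hGnn : ∀ μ ν, 0 ≤ G μ ν := fun μ ν => by positivity
  -- integrability in ν
  have hbase : ∀ μ : ℝ, IntervalIntegrable (fun ν => K * |μ - ν| ^ (2*H-2)) volume s t := by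
    intro μ
    have h1 := (aux_abs_rpow_II hp (μ - s) (μ - t)).comp_sub_left μ
    simp only [sub_sub_cancel] at h1
    exact h1.const_mul K
  have hGint : ∀ μ : ℝ, IntervalIntegrable (fun ν => G μ ν) volume s t := by
    intro μ
    have hc : ContinuousOn (fun ν => exp (-lam * (t - μ)) * exp (-lam * (t - ν)))
        (Set.uIcc s t) := by fun_prop
    have := (hbase μ).continuousOn_mul hc
    simpa [hGdef, mul_assoc] using this
  have hinner_nn : ∀ μ : ℝ, 0 ≤ ∫ ν in s..t, G μ ν :=
    fun μ => intervalIntegral.integral_nonneg hst (fun u _ => hGnn μ u)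
  -- Bound A on the inner integral
  have hJ : ∀ μ ∈ Set.Icc s t,
      (∫ ν in s..t, |μ - ν| ^ (2*H-2)) ≤ 2 * (t-s) ^ (2*H-1) / (2*H-1) := by
    intro μ hμ
    have hev : ∀ x : ℝ, |(-x)| ^ (2*H-2) = |x| ^ (2*H-2) := fun x => by rw [abs_neg]
    have := aux_shift_bound hev (fun x => by positivity)
      (fun a b => aux_abs_rpow_II hp a b) hst hμ
    refine le_trans this ?_
    have hval : (∫ r in (0:ℝ)..(t-s), |r| ^ (2*H-2)) = (t-s) ^ (2*H-1) / (2*H-1) := by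
      rw [intervalIntegral.integral_congr (g := fun r => r ^ (2*H-2)) ?_,
        integral_rpow (Or.inl hp)]
      · norm_num
        rw [Real.zero_rpow (by linarith : 2*H-2+1 ≠ 0)]
        ring_nf
      · intro x hx
        rw [Set.uIcc_of_le ha0] at hx
        simp [abs_of_nonneg hx.1]
    rw [hval]; ring_nf; rfl
  have hA_inner : ∀ μ ∈ Set.Icc s t,
      (∫ ν in s..t, G μ ν) ≤ 2*H*(t-s) ^ (2*H-1) := by
    intro μ hμ
    have step1 : (∫ ν in s..t, G μ ν) ≤ ∫ ν in s..t, K * |μ - ν| ^ (2*H-2) := by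
      refine intervalIntegral.integral_mono_on hst (hGint μ) (hbase μ) ?_
      intro ν hν
      have h1 : exp (-lam * (t - μ)) ≤ 1 := by
        rw [Real.exp_le_one_iff]; nlinarith [hμ.2, hν.2]
      have h2 : exp (-lam * (t - ν)) ≤ 1 := by
        rw [Real.exp_le_one_iff]; nlinarith [hν.2]
      have h3 : (0:ℝ) ≤ K * |μ - ν| ^ (2*H-2) := by positivity
      calc exp (-lam * (t - μ)) * exp (-lam * (t - ν)) * (K * |μ - ν| ^ (2*H-2))
          ≤ 1 * 1 * (K * |μ - ν| ^ (2*H-2)) := by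
            apply mul_le_mul_of_nonneg_right _ h3
            exact mul_le_mul h1 h2 (Real.exp_nonneg _) zero_le_one
        _ = K * |μ - ν| ^ (2*H-2) := by ring
    rw [intervalIntegral.integral_const_mul] at step1
    refine le_trans step1 ?_
    have := hJ μ hμ
    calc K * ∫ ν in s..t, |μ - ν| ^ (2*H-2)
        ≤ K * (2 * (t-s) ^ (2*H-1) / (2*H-1)) := by
          exact mul_le_mul_of_nonneg_left this hK.le
      _ = 2*H*(t-s) ^ (2*H-1) := by field_simp; ring
  -- overall bound A
  have hboundA : (∫ μ in s..t, ∫ ν in s..t, G μ ν) ≤ 2*H*(t-s) ^ (2*H) := by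
    have hnorm : ‖∫ μ in s..t, ∫ ν in s..t, G μ ν‖ ≤ (2*H*(t-s) ^ (2*H-1)) * |t - s| := by
      apply intervalIntegral.norm_integral_le_of_norm_le_const
      intro μ hμ
      rw [Set.uIoc_of_le hst] at hμ
      have hμ' : μ ∈ Set.Icc s t := ⟨hμ.1.le, hμ.2⟩
      rw [Real.norm_eq_abs, abs_of_nonneg (hinner_nn μ)]
      exact hA_inner μ hμ'
    have h2 : (2*H*(t-s) ^ (2*H-1)) * |t - s| = 2*H*(t-s) ^ (2*H) := by
      rw [abs_of_nonneg (by linarith : (0:ℝ) ≤ t - s)]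
      have : (t-s) ^ (2*H) = (t-s) ^ (2*H-1) * (t-s) ^ (1:ℝ) := by
        rw [← Real.rpow_add' ha0 (by intro h; nlinarith : 2*H-1+1 ≠ 0)]
        congr 1; ring
      rw [this, Real.rpow_one]; ring
    calc (∫ μ in s..t, ∫ ν in s..t, G μ ν) ≤ ‖∫ μ in s..t, ∫ ν in s..t, G μ ν‖ :=
          le_abs_self _
      _ ≤ (2*H*(t-s) ^ (2*H-1)) * |t - s| := hnorm
      _ = 2*H*(t-s) ^ (2*H) := h2
  -- integrability of the inner integral as a function of μ
  have hinner_int : IntervalIntegrable (fun μ => ∫ ν in s..t, G μ ν) volume s t := by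
    rw [intervalIntegrable_iff_integrableOn_Ioc_of_le hst]
    have hGm : StronglyMeasurable (fun p : ℝ × ℝ => G p.1 p.2) := by
      apply Measurable.stronglyMeasurable
      simp only [hGdef]
      fun_prop
    have hrw : (fun μ => ∫ ν in s..t, G μ ν) = fun μ => ∫ ν in Set.Ioc s t, G μ ν := by
      funext μ; rw [intervalIntegral.integral_of_le hst]
    rw [hrw]
    have hsm : StronglyMeasurable (fun μ => ∫ ν in Set.Ioc s t, G μ ν) :=
      hGm.integral_prod_right'
    refine Integrable.mono' (integrable_const (2*H*(t-s) ^ (2*H-1)))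
      hsm.aestronglyMeasurable ?_
    filter_upwards [ae_restrict_mem measurableSet_Ioc] with μ hμ
    have hμ' : μ ∈ Set.Icc s t := ⟨hμ.1.le, hμ.2⟩
    rw [Real.norm_eq_abs, abs_of_nonneg]
    · rw [← intervalIntegral.integral_of_le hst]; exact hA_inner μ hμ'
    · rw [← intervalIntegral.integral_of_le hst]; exact hinner_nn μ
  -- Bound B
  set g : ℝ → ℝ := fun r => exp (-(lam/2 * |r|)) * |r| ^ (2*H-2) with hgdef
  have hg_ev : ∀ x : ℝ, g (-x) = g x := by intro x; simp [hgdef, abs_neg]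
  have hg_nn : ∀ x : ℝ, 0 ≤ g x := by intro x; positivity
  have hg_int : ∀ a b : ℝ, IntervalIntegrable g volume a b := by
    intro a b
    have hc : ContinuousOn (fun r : ℝ => exp (-(lam/2 * |r|))) (Set.uIcc a b) := by fun_prop
    exact (aux_abs_rpow_II hp a b).continuousOn_mul hc
  have hIoi : IntegrableOn (fun r : ℝ => r ^ (2*H-2) * exp (-(lam/2 * r))) (Ioi 0) volume := by
    have h := integrableOn_rpow_mul_exp_neg_mul_rpow (by linarith : (-1:ℝ) < 2*H-2)
      (zero_lt_one) (by positivity : (0:ℝ) < lam/2)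
    refine h.congr_fun ?_ measurableSet_Ioi
    intro x hx
    simp only [Real.rpow_one]
    ring_nf
  set D : ℝ := ∫ r in Ioi (0:ℝ), r ^ (2*H-2) * exp (-(lam/2 * r)) with hDdef
  have hD_val : D = (1/(lam/2)) ^ (2*H-1) * Real.Gamma (2*H-1) := by
    rw [hDdef, ← Real.integral_rpow_mul_exp_neg_mul_Ioi (by linarith : (0:ℝ) < 2*H-1)
      (by positivity : (0:ℝ) < lam/2)]
    have : (2*H-1) - 1 = 2*H-2 := by ring
    rw [this]
  have hD_nn : 0 ≤ D := by
    rw [hDdef]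
    apply setIntegral_nonneg measurableSet_Ioi
    intro x hx
    have : (0:ℝ) < x := hx
    positivity
  have h0c : ∀ c : ℝ, 0 ≤ c → (∫ r in (0:ℝ)..c, g r) ≤ D := by
    intro c hc
    rw [intervalIntegral.integral_of_le hc]
    have hEq : Set.EqOn g (fun r => r ^ (2*H-2) * exp (-(lam/2 * r))) (Set.Ioc 0 c) := by
      intro r hr
      simp only [hgdef, abs_of_pos hr.1]
      ring
    rw [setIntegral_congr_fun measurableSet_Ioc hEq]
    refine setIntegral_mono_set hIoi ?_ (HasSubset.Subset.eventuallyLE Set.Ioc_subset_Ioi_self)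
    filter_upwards [ae_restrict_mem measurableSet_Ioi] with x hx
    have hx' : (0:ℝ) < x := hx
    positivity
  have hshift : ∀ μ ∈ Set.Icc s t, (∫ ν in s..t, g (μ - ν)) ≤ 2 * D := by
    intro μ hμ
    rw [intervalIntegral.integral_comp_sub_left g μ]
    have key := intervalIntegral.integral_comp_neg g (a := (0:ℝ)) (b := t - μ)
    simp only [hg_ev, neg_zero] at key
    have h1 : (∫ r in (μ-t)..(0:ℝ), g r) ≤ D := by
      rw [show μ - t = -(t-μ) by ring, ← key]
      exact h0c (t-μ) (by linarith [hμ.2])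
    have h2 : (∫ r in (0:ℝ)..(μ-s), g r) ≤ D := h0c _ (by linarith [hμ.1])
    have hsplit : (∫ r in (μ-t)..(μ-s), g r)
        = (∫ r in (μ-t)..(0:ℝ), g r) + ∫ r in (0:ℝ)..(μ-s), g r :=
      (intervalIntegral.integral_add_adjacent_intervals (hg_int _ _) (hg_int _ _)).symm
    rw [hsplit]; linarith
  have hB_inner : ∀ μ ∈ Set.Icc s t,
      (∫ ν in s..t, G μ ν) ≤ exp (-(lam/2) * (t - μ)) * (K * (2*D)) := by
    intro μ hμ
    have hg1 : IntervalIntegrable (fun ν => g (μ - ν)) volume s t := by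
      have := (hg_int (μ - s) (μ - t)).comp_sub_left μ
      simpa [sub_sub_cancel] using this
    have hRHSint : IntervalIntegrable
        (fun ν => exp (-(lam/2) * (t - μ)) * (K * g (μ - ν))) volume s t :=
      (hg1.const_mul K).const_mul _
    have hpt : ∀ ν ∈ Set.Icc s t, G μ ν ≤ exp (-(lam/2) * (t - μ)) * (K * g (μ - ν)) := by
      intro ν hν
      have hexp : exp (-lam * (t - μ)) * exp (-lam * (t - ν)) ≤
          exp (-(lam/2) * (t - μ)) * exp (-(lam/2 * |μ - ν|)) := by
        rw [← Real.exp_add, ← Real.exp_add]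
        apply Real.exp_le_exp.mpr
        rcases abs_cases (μ - ν) with ⟨h1, _⟩ | ⟨h1, _⟩ <;> rw [h1] <;>
          nlinarith [hμ.1, hμ.2, hν.1, hν.2, hlam0]
      calc G μ ν
          = (exp (-lam * (t - μ)) * exp (-lam * (t - ν))) * (K * |μ - ν| ^ (2*H-2)) := rfl
        _ ≤ (exp (-(lam/2) * (t - μ)) * exp (-(lam/2 * |μ - ν|))) * (K * |μ - ν| ^ (2*H-2)) :=
            mul_le_mul_of_nonneg_right hexp (by positivity)
        _ = exp (-(lam/2) * (t - μ)) * (K * g (μ - ν)) := by simp only [hgdef]; ring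
    have step := intervalIntegral.integral_mono_on hst (hGint μ) hRHSint hpt
    refine le_trans step ?_
    rw [intervalIntegral.integral_const_mul, intervalIntegral.integral_const_mul]
    exact mul_le_mul_of_nonneg_left
      (mul_le_mul_of_nonneg_left (hshift μ hμ) hK.le) (Real.exp_pos _).le
  have hExpInt : (∫ μ in s..t, exp (-(lam/2) * (t - μ))) ≤ 2/lam := by
    have hrw : (fun μ : ℝ => exp (-(lam/2) * (t - μ)))
        = fun μ => exp ((lam/2) * μ + (-(lam/2) * t)) := by
      funext μ; congr 1; ring
    rw [hrw, intervalIntegral.integral_comp_mul_add Real.exp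
      (by positivity : (lam/2) ≠ 0) (-(lam/2) * t), integral_exp]
    have h1 : lam/2*t + -(lam/2)*t = 0 := by ring
    rw [h1, Real.exp_zero, smul_eq_mul]
    have h2 : (0:ℝ) < exp (lam/2*s + -(lam/2)*t) := Real.exp_pos _
    have h3 : (0:ℝ) ≤ (lam/2)⁻¹ := by positivity
    calc (lam/2)⁻¹ * (1 - exp (lam/2*s + -(lam/2)*t)) ≤ (lam/2)⁻¹ * 1 :=
          mul_le_mul_of_nonneg_left (by linarith) h3
      _ = 2/lam := by field_simp
  have hExpCint : IntervalIntegrable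
      (fun μ => exp (-(lam/2) * (t - μ)) * (K * (2*D))) volume s t :=
    (Continuous.intervalIntegrable (by fun_prop) s t)
  have hboundB : (∫ μ in s..t, ∫ ν in s..t, G μ ν)
      ≤ (K * 2 ^ (2*H+1) * Real.Gamma (2*H-1) + 1) * lam ^ (-(2*H)) := by
    have step := intervalIntegral.integral_mono_on hst hinner_int hExpCint hB_inner
    rw [intervalIntegral.integral_mul_const] at step
    have hKD : (0:ℝ) ≤ K * (2*D) := mul_nonneg hK.le (by linarith)
    have step2 : (∫ μ in s..t, exp (-(lam/2)*(t-μ))) * (K * (2*D)) ≤ (2/lam) * (K*(2*D)) :=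
      mul_le_mul_of_nonneg_right hExpInt hKD
    have hDval' : D = (2/lam) ^ (2*H-1) * Real.Gamma (2*H-1) := by
      rw [hD_val, one_div_div]
    have key : (2/lam) * (K * (2*D)) = K * 2 ^ (2*H+1) * Real.Gamma (2*H-1) * lam ^ (-(2*H)) := by
      rw [hDval', Real.div_rpow (by norm_num : (0:ℝ) ≤ 2) hlam0.le, Real.rpow_neg hlam0.le]
      have h2pow : (2:ℝ) ^ (2*H+1) = 2 ^ (2*H-1) * 2 ^ (2:ℝ) := by
        rw [← Real.rpow_add (by norm_num : (0:ℝ) < 2)]; congr 1; ring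
      have hlpow : lam ^ (2*H) = lam ^ (2*H-1) * lam ^ (1:ℝ) := by
        rw [← Real.rpow_add hlam0]; congr 1; ring
      have h4 : (2:ℝ) ^ (2:ℝ) = 4 := by
        rw [show (2:ℝ) = ((2:ℕ):ℝ) from by norm_num, Real.rpow_natCast]; norm_num
      rw [h2pow, hlpow, Real.rpow_one, h4]
      have e1 : lam ^ (2*H-1) ≠ 0 := ne_of_gt (Real.rpow_pos_of_pos hlam0 _)
      field_simp
      ring
    have hfinal : (2/lam) * (K*(2*D)) ≤ (K * 2 ^ (2*H+1) * Real.Gamma (2*H-1) + 1) * lam ^ (-(2*H)) := by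
      rw [key]
      have : (0:ℝ) < lam ^ (-(2*H)) := Real.rpow_pos_of_pos hlam0 _
      nlinarith
    exact le_trans step (le_trans step2 hfinal)
  exact ⟨intervalIntegral.integral_nonneg hst (fun u _ => hinner_nn u), hboundA, hboundB⟩

lemma perk (H ϑ lam s t : ℝ) (hH1 : 1/2 < H) (hH2 : H < 1) (hϑ0 : 0 ≤ ϑ) (hϑH : ϑ ≤ H)
    (hl : 1 ≤ lam) (hst : s ≤ t) :
    lam ^ (2*ϑ) * (∫ μ in s..t, ∫ ν in s..t,
        exp (-lam * (t - μ)) * exp (-lam * (t - ν)) * (H * (2*H-1) * |μ - ν| ^ (2*H-2)))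
      ≤ 2*H*(H*(2*H-1) * 2 ^ (2*H+1) * Real.Gamma (2*H-1) + 1) * (t-s) ^ (2*(H-ϑ)) := by
  obtain ⟨hI0, hIA, hIB⟩ := core H lam s t hH1 hH2 hl hst
  set I := ∫ μ in s..t, ∫ ν in s..t,
      exp (-lam * (t - μ)) * exp (-lam * (t - ν)) * (H * (2*H-1) * |μ - ν| ^ (2*H-2)) with hIdef
  set CB := H*(2*H-1) * 2 ^ (2*H+1) * Real.Gamma (2*H-1) + 1 with hCB
  have hH0 : (0:ℝ) < H := by linarith
  have hX : (0:ℝ) ≤ H*(2*H-1) * 2 ^ (2*H+1) * Real.Gamma (2*H-1) :=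
    mul_nonneg (mul_nonneg (by nlinarith) (Real.rpow_nonneg (by norm_num) _))
      (Real.Gamma_nonneg_of_nonneg (by linarith))
  have hCB1 : 1 ≤ CB := by rw [hCB]; linarith
  set θ := ϑ/H with hθdef
  have hθ0 : 0 ≤ θ := div_nonneg hϑ0 hH0.le
  have hθ1 : θ ≤ 1 := (div_le_one hH0).mpr hϑH
  have hlam0 : (0:ℝ) < lam := by linarith
  have ha0 : (0:ℝ) ≤ t - s := by linarith
  have hA0 : (0:ℝ) ≤ 2*H*(t-s) ^ (2*H) := by positivity
  have hinterp : I ≤ (2*H*(t-s) ^ (2*H)) ^ (1-θ) * (CB * lam ^ (-(2*H))) ^ θ := by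
    calc I = I ^ ((1-θ)+θ) := by rw [sub_add_cancel, Real.rpow_one]
      _ = I ^ (1-θ) * I ^ θ := Real.rpow_add' hI0 (by intro h; linarith [h])
      _ ≤ (2*H*(t-s) ^ (2*H)) ^ (1-θ) * (CB * lam ^ (-(2*H))) ^ θ := by
          apply mul_le_mul (Real.rpow_le_rpow hI0 hIA (by linarith))
            (Real.rpow_le_rpow hI0 (le_trans hIB (le_of_eq rfl)) hθ0)
            (Real.rpow_nonneg hI0 _) (Real.rpow_nonneg hA0 _)
  have e1 : (2*H*(t-s) ^ (2*H)) ^ (1-θ) = (2*H) ^ (1-θ) * (t-s) ^ (2*(H-ϑ)) := by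
    have hexp : 2*H*(1-θ) = 2*(H-ϑ) := by
      rw [hθdef]; field_simp
    rw [Real.mul_rpow (by linarith) (Real.rpow_nonneg ha0 _), ← Real.rpow_mul ha0, hexp]
  have e2 : (CB * lam ^ (-(2*H))) ^ θ = CB ^ θ * lam ^ (-(2*ϑ)) := by
    have hexp : (-(2*H))*θ = -(2*ϑ) := by
      rw [hθdef]; field_simp
    rw [Real.mul_rpow (by linarith) (Real.rpow_nonneg hlam0.le _), ← Real.rpow_mul hlam0.le, hexp]
  have hle1 : (2*H) ^ (1-θ) ≤ 2*H := by
    have h := Real.rpow_le_rpow_of_exponent_le (by linarith : (1:ℝ) ≤ 2*H)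
      (by linarith : 1-θ ≤ 1)
    rwa [Real.rpow_one] at h
  have hle2 : CB ^ θ ≤ CB := by
    have h := Real.rpow_le_rpow_of_exponent_le hCB1 hθ1
    rwa [Real.rpow_one] at h
  have hcanc : lam ^ (2*ϑ) * lam ^ (-(2*ϑ)) = 1 := by
    rw [← Real.rpow_add hlam0]; simp
  calc lam ^ (2*ϑ) * I
      ≤ lam ^ (2*ϑ) * ((2*H) ^ (1-θ) * (t-s) ^ (2*(H-ϑ)) * (CB ^ θ * lam ^ (-(2*ϑ)))) := by
        refine mul_le_mul_of_nonneg_left ?_ (Real.rpow_nonneg hlam0.le _)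
        rw [← e1]
        calc I ≤ (2*H*(t-s) ^ (2*H)) ^ (1-θ) * (CB * lam ^ (-(2*H))) ^ θ := hinterp
          _ = (2*H*(t-s) ^ (2*H)) ^ (1-θ) * (CB ^ θ * lam ^ (-(2*ϑ))) := by rw [e2]
    _ = ((2*H) ^ (1-θ) * CB ^ θ) * (t-s) ^ (2*(H-ϑ)) * (lam ^ (2*ϑ) * lam ^ (-(2*ϑ))) := by
        ring
    _ = ((2*H) ^ (1-θ) * CB ^ θ) * (t-s) ^ (2*(H-ϑ)) := by rw [hcanc, mul_one]
    _ ≤ (2*H*CB) * (t-s) ^ (2*(H-ϑ)) := by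
        refine mul_le_mul_of_nonneg_right ?_ (Real.rpow_nonneg ha0 _)
        exact mul_le_mul hle1 hle2 (Real.rpow_nonneg (by linarith) _) (by linarith)
    _ = 2*H*CB * (t-s) ^ (2*(H-ϑ)) := by ring

/-- Spectral form of the semigroup regularity estimate (Lemma on `S(t)`), with the Dirichlet
eigenvalues `λ_k = k²π²` and the fBm covariance density `φ_H(y) = H(2H-1)|y|^{2H-2}`. -/
theorem stmt_2 (H : ℝ) (hH : H ∈ Set.Ioo (1/2 : ℝ) 1) :
    ∃ C : ℝ, 0 < C ∧ ∀ ϑ ∈ Set.Icc (0 : ℝ) H, ∀ s t : ℝ, 0 < s → s ≤ t →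
      ∀ c : ℕ+ → ℝ, Summable (fun k : ℕ+ => (c k) ^ 2) →
        ∑' k : ℕ+,
            (c k) ^ 2 * (((k : ℝ) ^ 2 * π ^ 2) ^ (2 * ϑ)) *
              ∫ μ in s..t, ∫ ν in s..t,
                Real.exp (-((k : ℝ) ^ 2 * π ^ 2) * (t - μ)) *
                  Real.exp (-((k : ℝ) ^ 2 * π ^ 2) * (t - ν)) *
                    (H * (2 * H - 1) * |μ - ν| ^ (2 * H - 2))
          ≤ C * (t - s) ^ (2 * (H - ϑ)) * ∑' k : ℕ+, (c k) ^ 2 := by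
  obtain ⟨hH1, hH2⟩ := hH
  have hX : (0:ℝ) ≤ H*(2*H-1) * 2 ^ (2*H+1) * Real.Gamma (2*H-1) :=
    mul_nonneg (mul_nonneg (by nlinarith) (Real.rpow_nonneg (by norm_num) _))
      (Real.Gamma_nonneg_of_nonneg (by linarith))
  refine ⟨2*H*(H*(2*H-1) * 2 ^ (2*H+1) * Real.Gamma (2*H-1) + 1), ?_, ?_⟩
  · apply mul_pos (by linarith) (by linarith)
  · intro ϑ hϑ s t hs hst c hc
    set C := 2*H*(H*(2*H-1) * 2 ^ (2*H+1) * Real.Gamma (2*H-1) + 1) with hCdef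
    have hC0 : 0 < C := mul_pos (by linarith) (by linarith)
    set a' := (t-s) ^ (2*(H-ϑ)) with ha'def
    have ha'0 : 0 ≤ a' := Real.rpow_nonneg (by linarith) _
    have hlk : ∀ k : ℕ+, (1:ℝ) ≤ (k:ℝ)^2*π^2 := by
      intro k
      have h1 : (1:ℝ) ≤ (k:ℝ) := by exact_mod_cast k.one_le
      have h2 : (1:ℝ) ≤ (k:ℝ)^2 := by nlinarith
      have h3 : (9:ℝ) ≤ π^2 := by nlinarith [Real.pi_gt_three]
      nlinarith
    have hterm : ∀ k : ℕ+,
        (c k) ^ 2 * (((k : ℝ) ^ 2 * π ^ 2) ^ (2 * ϑ)) *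
          (∫ μ in s..t, ∫ ν in s..t,
            Real.exp (-((k : ℝ) ^ 2 * π ^ 2) * (t - μ)) *
              Real.exp (-((k : ℝ) ^ 2 * π ^ 2) * (t - ν)) *
                (H * (2 * H - 1) * |μ - ν| ^ (2 * H - 2)))
          ≤ (c k) ^ 2 * (C * a') := by
      intro k
      have h := perk H ϑ ((k:ℝ)^2*π^2) s t hH1 hH2 hϑ.1 hϑ.2 (hlk k) hst
      calc (c k) ^ 2 * (((k : ℝ) ^ 2 * π ^ 2) ^ (2 * ϑ)) *
            (∫ μ in s..t, ∫ ν in s..t,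
              Real.exp (-((k : ℝ) ^ 2 * π ^ 2) * (t - μ)) *
                Real.exp (-((k : ℝ) ^ 2 * π ^ 2) * (t - ν)) *
                  (H * (2 * H - 1) * |μ - ν| ^ (2 * H - 2)))
          = (c k) ^ 2 * ((((k : ℝ) ^ 2 * π ^ 2) ^ (2 * ϑ)) *
            (∫ μ in s..t, ∫ ν in s..t,
              Real.exp (-((k : ℝ) ^ 2 * π ^ 2) * (t - μ)) *
                Real.exp (-((k : ℝ) ^ 2 * π ^ 2) * (t - ν)) *
                  (H * (2 * H - 1) * |μ - ν| ^ (2 * H - 2)))) := by ring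
        _ ≤ (c k) ^ 2 * (C * a') := mul_le_mul_of_nonneg_left h (sq_nonneg _)
    have hnn : ∀ k : ℕ+,
        0 ≤ (c k) ^ 2 * (((k : ℝ) ^ 2 * π ^ 2) ^ (2 * ϑ)) *
          (∫ μ in s..t, ∫ ν in s..t,
            Real.exp (-((k : ℝ) ^ 2 * π ^ 2) * (t - μ)) *
              Real.exp (-((k : ℝ) ^ 2 * π ^ 2) * (t - ν)) *
                (H * (2 * H - 1) * |μ - ν| ^ (2 * H - 2))) := by
      intro k
      have hI0 := (core H ((k:ℝ)^2*π^2) s t hH1 hH2 (hlk k) hst).1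
      exact mul_nonneg (mul_nonneg (sq_nonneg _) (Real.rpow_nonneg (by positivity) _)) hI0
    have hsumR : Summable (fun k : ℕ+ => (c k) ^ 2 * (C * a')) := hc.mul_right _
    have hsumL := Summable.of_nonneg_of_le hnn hterm hsumR
    calc (∑' k : ℕ+,
            (c k) ^ 2 * (((k : ℝ) ^ 2 * π ^ 2) ^ (2 * ϑ)) *
              ∫ μ in s..t, ∫ ν in s..t,
                Real.exp (-((k : ℝ) ^ 2 * π ^ 2) * (t - μ)) *
                  Real.exp (-((k : ℝ) ^ 2 * π ^ 2) * (t - ν)) *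
                    (H * (2 * H - 1) * |μ - ν| ^ (2 * H - 2)))
        ≤ ∑' k : ℕ+, (c k) ^ 2 * (C * a') := Summable.tsum_le_tsum hterm hsumL hsumR
      _ = (∑' k : ℕ+, (c k) ^ 2) * (C * a') := tsum_mul_right
      _ = C * a' * ∑' k : ℕ+, (c k) ^ 2 := by ring
end

section
/- Let $H \in (\frac12, 1)$ and define the kernel $\phi_H(y) := H(2H-1)|y|^{2H-2}$ for $y \neq 0$. For every $\lambda > 0$ and every $t \ge 0$, $$\lambda^{2H} \int_0^t \int_0^t e^{-\lambda(t-u)} e^{-\lambda(t-v)} \, \phi_H(u-v)\, du\, dv \le H\,\Gamma(2H),$$ where $\Gamma$ is the Gamma function. -/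
open Real MeasureTheory intervalIntegral
open scoped ENNReal NNReal

lemma refl_lintegral_le (f : ℝ → ℝ≥0∞) (hf : Measurable f) (a : ℝ) :
    ∫⁻ v in Set.Ioc 0 a, f (a - v) ≤ ∫⁻ s in Set.Ioi 0, f s := by
  have key : ∀ v : ℝ, (Set.Ioc 0 a).indicator (fun v => f (a - v)) v
      = (Set.Ico 0 a).indicator f (a - v) := by
    intro v
    by_cases hv : v ∈ Set.Ioc 0 a
    · rw [Set.indicator_of_mem hv, Set.indicator_of_mem]
      obtain ⟨h1, h2⟩ := hv
      exact ⟨by linarith, by linarith⟩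
    · rw [Set.indicator_of_notMem hv, Set.indicator_of_notMem]
      intro hmem
      obtain ⟨h1, h2⟩ := hmem
      exact hv ⟨by linarith, by linarith⟩
  calc ∫⁻ v in Set.Ioc 0 a, f (a - v)
      = ∫⁻ v, (Set.Ioc 0 a).indicator (fun v => f (a - v)) v :=
        (lintegral_indicator measurableSet_Ioc _).symm
    _ = ∫⁻ v, (Set.Ico 0 a).indicator f (a - v) := by simp_rw [key]
    _ = ∫⁻ s, (Set.Ico 0 a).indicator f s :=
        (Measure.measurePreserving_sub_left volume a).lintegral_comp
          (hf.indicator measurableSet_Ico)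
    _ = ∫⁻ s in Set.Ico 0 a, f s := lintegral_indicator measurableSet_Ico _
    _ ≤ ∫⁻ s in Set.Ici 0, f s := lintegral_mono_set Set.Ico_subset_Ici_self
    _ = ∫⁻ s in Set.Ioi 0, f s := by
        rw [Measure.restrict_congr_set Ioi_ae_eq_Ici]

lemma ofReal_integral_le' {μ : Measure ℝ} (f : ℝ → ℝ) (hf : ∀ x, 0 ≤ f x) :
    ENNReal.ofReal (∫ x, f x ∂μ) ≤ ∫⁻ x, ENNReal.ofReal (f x) ∂μ := by
  calc ENNReal.ofReal (∫ x, f x ∂μ) ≤ (‖∫ x, f x ∂μ‖₊ : ℝ≥0∞) := by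
        rw [← enorm_eq_nnnorm, Real.enorm_eq_ofReal_abs]
        exact ENNReal.ofReal_le_ofReal (le_abs_self _)
    _ ≤ ∫⁻ x, (‖f x‖₊ : ℝ≥0∞) ∂μ := enorm_integral_le_lintegral_enorm _
    _ = ∫⁻ x, ENNReal.ofReal (f x) ∂μ :=
        lintegral_congr fun x => by rw [← enorm_eq_nnnorm, Real.enorm_eq_ofReal_abs, abs_of_nonneg (hf x)]

/-- Uniform bound `λ^{2H} ∫_0^t ∫_0^t e^{-λ(t-u)} e^{-λ(t-v)} φ_H(u-v) du dv ≤ H Γ(2H)`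
for the fBm covariance density `φ_H(y) = H(2H-1)|y|^{2H-2}`. -/
theorem stmt_3 (H : ℝ) (hH : H ∈ Set.Ioo (1/2 : ℝ) 1) (lam : ℝ) (hlam : 0 < lam)
    (t : ℝ) (ht : 0 ≤ t) :
    lam ^ (2 * H) *
        ∫ u in (0 : ℝ)..t, ∫ v in (0 : ℝ)..t,
          Real.exp (-lam * (t - u)) * Real.exp (-lam * (t - v)) *
            (H * (2 * H - 1) * |u - v| ^ (2 * H - 2))
      ≤ H * Real.Gamma (2 * H) := by
  obtain ⟨hH1, hH2⟩ := hH
  have hexp : (0:ℝ) < 2*H - 1 := by linarith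
  have hc0 : (0:ℝ) < H * (2*H - 1) := by nlinarith
  have hΓpos : 0 < Real.Gamma (2*H-1) := Real.Gamma_pos_of_pos hexp
  -- notation
  set G : ℝ × ℝ → ℝ≥0∞ := fun p => ENNReal.ofReal
      (Real.exp (-lam * (t - p.1)) * Real.exp (-lam * (t - p.2)) *
        (H * (2 * H - 1) * |p.1 - p.2| ^ (2 * H - 2))) with hGdef
  set fγ : ℝ → ℝ≥0∞ := fun s => ENNReal.ofReal (Real.exp (-(lam * s)) * |s| ^ (2*H-2)) with hfγdef
  set fE : ℝ → ℝ≥0∞ := fun s => ENNReal.ofReal (Real.exp (-(2*lam*s))) with hfEdef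
  set γval : ℝ := (1/lam) ^ (2*H-1) * Real.Gamma (2*H-1) with hγval
  have hγval0 : 0 ≤ γval := by
    rw [hγval]
    have : (0:ℝ) ≤ (1/lam) ^ (2*H-1) := Real.rpow_nonneg (by positivity) _
    exact mul_nonneg this hΓpos.le
  -- nonnegativity of the integrand
  have hnn : ∀ u v : ℝ, 0 ≤ Real.exp (-lam * (t - u)) * Real.exp (-lam * (t - v)) *
      (H * (2 * H - 1) * |u - v| ^ (2 * H - 2)) := fun u v =>
    mul_nonneg (mul_nonneg (Real.exp_pos _).le (Real.exp_pos _).le)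
      (mul_nonneg hc0.le (Real.rpow_nonneg (abs_nonneg _) _))
  -- measurability
  have hmG : Measurable G := by
    apply ENNReal.measurable_ofReal.comp
    exact ((Real.measurable_exp.comp ((measurable_const.sub measurable_fst).const_mul
        (-lam))).mul (Real.measurable_exp.comp ((measurable_const.sub
        measurable_snd).const_mul (-lam)))).mul
      (((measurable_fst.sub measurable_snd).abs.pow measurable_const).const_mul _)
  have hfγ : Measurable fγ :=
    ENNReal.measurable_ofReal.comp ((Real.measurable_exp.comp
      (measurable_id.const_mul lam).neg).mul (measurable_id.abs.pow measurable_const))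
  have hfE : Measurable fE :=
    ENNReal.measurable_ofReal.comp (Real.measurable_exp.comp
      (measurable_id.const_mul (2*lam)).neg)
  -- key algebraic identities
  have keyF1 : ∀ u v : ℝ, G (u, v)
      = ENNReal.ofReal (Real.exp (-(2*lam*(t-u)))) *
        (ENNReal.ofReal (H * (2*H-1)) * fγ (u - v)) := by
    intro u v
    have e : Real.exp (-lam * (t - u)) * Real.exp (-lam * (t - v)) *
        (H * (2 * H - 1) * |u - v| ^ (2 * H - 2))
        = Real.exp (-(2*lam*(t-u))) *
          ((H * (2*H-1)) * (Real.exp (-(lam * (u - v))) * |u - v| ^ (2*H-2))) := by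
      have eexp : Real.exp (-lam * (t - u)) * Real.exp (-lam * (t - v))
          = Real.exp (-(2*lam*(t-u))) * Real.exp (-(lam * (u - v))) := by
        rw [← Real.exp_add, ← Real.exp_add]; congr 1; ring
      rw [eexp]; ring
    show ENNReal.ofReal _ = _
    rw [e, ENNReal.ofReal_mul (Real.exp_pos _).le, ENNReal.ofReal_mul hc0.le]
  have keyF2 : ∀ u v : ℝ, G (u, v)
      = ENNReal.ofReal (Real.exp (-(2*lam*(t-v)))) *
        (ENNReal.ofReal (H * (2*H-1)) * fγ (v - u)) := by
    intro u v
    have e : Real.exp (-lam * (t - u)) * Real.exp (-lam * (t - v)) *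
        (H * (2 * H - 1) * |u - v| ^ (2 * H - 2))
        = Real.exp (-(2*lam*(t-v))) *
          ((H * (2*H-1)) * (Real.exp (-(lam * (v - u))) * |v - u| ^ (2*H-2))) := by
      have eexp : Real.exp (-lam * (t - u)) * Real.exp (-lam * (t - v))
          = Real.exp (-(2*lam*(t-v))) * Real.exp (-(lam * (v - u))) := by
        rw [← Real.exp_add, ← Real.exp_add]; congr 1; ring
      rw [abs_sub_comm, eexp]; ring
    show ENNReal.ofReal _ = _
    rw [e, ENNReal.ofReal_mul (Real.exp_pos _).le, ENNReal.ofReal_mul hc0.le]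
  -- value of the Gamma-type integral
  have hGI : IntegrableOn (fun s : ℝ => s ^ (2*H-2) * Real.exp (-(lam * s))) (Set.Ioi 0) := by
    have base : IntegrableOn (fun x : ℝ => Real.exp (-x) * x ^ (2*H-1-1)) (Set.Ioi 0) :=
      Real.GammaIntegral_convergent hexp
    have comp : IntegrableOn
        (fun s : ℝ => lam ^ (2-2*H) * (Real.exp (-(lam*s)) * (lam*s) ^ (2*H-1-1)))
        (Set.Ioi 0) := by
      have := (integrableOn_Ioi_comp_mul_left_iff
        (fun x : ℝ => lam ^ (2-2*H) * (Real.exp (-x) * x ^ (2*H-1-1))) 0 hlam).2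
        (by rw [mul_zero]; exact base.const_mul _)
      simpa using this
    refine comp.congr_fun (fun s hs => ?_) measurableSet_Ioi
    have hs0 : (0:ℝ) < s := hs
    have h1 : ((lam*s) : ℝ) ^ (2*H-1-1) = lam ^ (2*H-1-1) * s ^ (2*H-1-1) :=
      Real.mul_rpow hlam.le hs0.le
    have h2 : lam ^ (2-2*H) * lam ^ (2*H-1-1) = 1 := by
      rw [← Real.rpow_add hlam, show (2-2*H) + (2*H-1-1) = (0:ℝ) by ring, Real.rpow_zero]
    calc lam ^ (2-2*H) * (Real.exp (-(lam*s)) * (lam*s) ^ (2*H-1-1))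
        = (lam ^ (2-2*H) * lam ^ (2*H-1-1)) * (s ^ (2*H-1-1) * Real.exp (-(lam*s))) := by
          rw [h1]; ring
      _ = s ^ (2*H-2) * Real.exp (-(lam*s)) := by
          rw [h2, one_mul, show (2*H-1-1 : ℝ) = 2*H-2 by ring]
  have Mg_eq : (∫⁻ s in Set.Ioi 0, fγ s) = ENNReal.ofReal γval := by
    have h1 : (∫⁻ s in Set.Ioi 0, fγ s)
        = ∫⁻ s in Set.Ioi 0, ENNReal.ofReal (s ^ (2*H-2) * Real.exp (-(lam*s))) := by
      refine setLIntegral_congr_fun measurableSet_Ioi (fun s hs => ?_)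
      have : (0:ℝ) < s := hs
      rw [hfγdef]
      simp only []
      rw [abs_of_pos this, mul_comm]
    rw [h1, ← ofReal_integral_eq_lintegral_ofReal hGI ?nn]
    case nn =>
      refine (ae_restrict_iff' measurableSet_Ioi).2 (ae_of_all _ fun s hs => ?_)
      have hs0 : (0:ℝ) < s := hs
      positivity
    rw [hγval]
    congr 1
    rw [show (2*H-2 : ℝ) = (2*H-1) - 1 by ring]
    exact Real.integral_rpow_mul_exp_neg_mul_Ioi hexp hlam
  -- the exponential integral bound
  have Eval : (∫⁻ s in Set.Ioi 0, fE s) = ENNReal.ofReal (1/(2*lam)) := by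
    have hint : IntegrableOn (fun s : ℝ => Real.exp (-(2*lam*s))) (Set.Ioi 0) := by
      simpa [neg_mul, mul_assoc] using
        exp_neg_integrableOn_Ioi 0 (by positivity : (0:ℝ) < 2*lam)
    rw [hfEdef]
    rw [← ofReal_integral_eq_lintegral_ofReal hint (ae_of_all _ fun s => (Real.exp_pos _).le)]
    congr 1
    have hv : ∫ s in Set.Ioi 0, Real.exp (-(2*lam*s)) = (1/(2*lam)) ^ (1:ℝ) * Real.Gamma 1 := by
      rw [← Real.integral_rpow_mul_exp_neg_mul_Ioi one_pos (by positivity : (0:ℝ) < 2*lam)]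
      refine setIntegral_congr_fun measurableSet_Ioi fun s hs => ?_
      rw [sub_self, Real.rpow_zero, one_mul]
    rw [hv, Real.Gamma_one, Real.rpow_one, mul_one]
  have Ebound : (∫⁻ u in Set.Ioc 0 t, fE (t - u)) ≤ ENNReal.ofReal (1/(2*lam)) :=
    (refl_lintegral_le fE hfE t).trans (le_of_eq Eval)
  -- the constant appearing in the final bound
  set K : ℝ≥0∞ := ENNReal.ofReal (1/(2*lam)) *
      (ENNReal.ofReal (H * (2*H-1)) * ENNReal.ofReal γval) with hK
  have hKne : ENNReal.ofReal (H * (2*H-1)) * ENNReal.ofReal γval ≠ ⊤ :=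
    ENNReal.mul_ne_top ENNReal.ofReal_ne_top ENNReal.ofReal_ne_top
  -- pointwise (in u) bound for the lower-triangle inner integral
  have Abound : ∀ a : ℝ, (∫⁻ v in Set.Ioc 0 a, G (a, v))
      ≤ fE (t - a) * (ENNReal.ofReal (H * (2*H-1)) * ENNReal.ofReal γval) := by
    intro a
    calc (∫⁻ v in Set.Ioc 0 a, G (a, v))
        = ∫⁻ v in Set.Ioc 0 a, ENNReal.ofReal (Real.exp (-(2*lam*(t-a)))) *
            (ENNReal.ofReal (H * (2*H-1)) * fγ (a - v)) :=
          lintegral_congr fun v => keyF1 a v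
      _ = ENNReal.ofReal (Real.exp (-(2*lam*(t-a)))) *
            ∫⁻ v in Set.Ioc 0 a, ENNReal.ofReal (H * (2*H-1)) * fγ (a - v) :=
          lintegral_const_mul' _ _ ENNReal.ofReal_ne_top
      _ = ENNReal.ofReal (Real.exp (-(2*lam*(t-a)))) *
            (ENNReal.ofReal (H * (2*H-1)) * ∫⁻ v in Set.Ioc 0 a, fγ (a - v)) := by
          rw [lintegral_const_mul' _ _ ENNReal.ofReal_ne_top]
      _ ≤ ENNReal.ofReal (Real.exp (-(2*lam*(t-a)))) *
            (ENNReal.ofReal (H * (2*H-1)) * ENNReal.ofReal γval) := by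
          refine mul_le_mul_right (mul_le_mul_right ?_ _) _
          exact (refl_lintegral_le fγ hfγ a).trans (le_of_eq Mg_eq)
      _ = fE (t - a) * (ENNReal.ofReal (H * (2*H-1)) * ENNReal.ofReal γval) := rfl
  have Bbound : ∀ b : ℝ, (∫⁻ u in Set.Ioc 0 b, G (u, b))
      ≤ fE (t - b) * (ENNReal.ofReal (H * (2*H-1)) * ENNReal.ofReal γval) := by
    intro b
    calc (∫⁻ u in Set.Ioc 0 b, G (u, b))
        = ∫⁻ u in Set.Ioc 0 b, ENNReal.ofReal (Real.exp (-(2*lam*(t-b)))) *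
            (ENNReal.ofReal (H * (2*H-1)) * fγ (b - u)) :=
          lintegral_congr fun u => keyF2 u b
      _ = ENNReal.ofReal (Real.exp (-(2*lam*(t-b)))) *
            ∫⁻ u in Set.Ioc 0 b, ENNReal.ofReal (H * (2*H-1)) * fγ (b - u) :=
          lintegral_const_mul' _ _ ENNReal.ofReal_ne_top
      _ = ENNReal.ofReal (Real.exp (-(2*lam*(t-b)))) *
            (ENNReal.ofReal (H * (2*H-1)) * ∫⁻ u in Set.Ioc 0 b, fγ (b - u)) := by
          rw [lintegral_const_mul' _ _ ENNReal.ofReal_ne_top]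
      _ ≤ ENNReal.ofReal (Real.exp (-(2*lam*(t-b)))) *
            (ENNReal.ofReal (H * (2*H-1)) * ENNReal.ofReal γval) := by
          refine mul_le_mul_right (mul_le_mul_right ?_ _) _
          exact (refl_lintegral_le fγ hfγ b).trans (le_of_eq Mg_eq)
      _ = fE (t - b) * (ENNReal.ofReal (H * (2*H-1)) * ENNReal.ofReal γval) := rfl
  -- measurability of the triangle inner integral
  have measA : Measurable fun u => ∫⁻ v in Set.Ioc 0 u, G (u, v) := by
    have hT : MeasurableSet {p : ℝ × ℝ | 0 < p.2 ∧ p.2 ≤ p.1} :=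
      (measurableSet_lt measurable_const measurable_snd).inter
        (measurableSet_le measurable_snd measurable_fst)
    have eq : ∀ u : ℝ, (∫⁻ v in Set.Ioc 0 u, G (u, v))
        = ∫⁻ v, ({p : ℝ × ℝ | 0 < p.2 ∧ p.2 ≤ p.1}).indicator G (u, v) := by
      intro u
      rw [← lintegral_indicator measurableSet_Ioc]
      refine lintegral_congr fun v => ?_
      by_cases hv : v ∈ Set.Ioc 0 u
      · rw [Set.indicator_of_mem hv, Set.indicator_of_mem
          (show (u, v) ∈ {p : ℝ × ℝ | 0 < p.2 ∧ p.2 ≤ p.1} from ⟨hv.1, hv.2⟩)]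
      · rw [Set.indicator_of_notMem hv,
          Set.indicator_of_notMem (fun hmem : (u, v) ∈ {p : ℝ × ℝ | 0 < p.2 ∧ p.2 ≤ p.1} =>
            hv ⟨hmem.1, hmem.2⟩)]
    simp_rw [eq]
    exact (hmG.indicator hT).lintegral_prod_right'
  -- split the double integral into lower and upper triangles
  have splitJ : (∫⁻ u in Set.Ioc 0 t, ∫⁻ v in Set.Ioc 0 t, G (u, v))
      = (∫⁻ u in Set.Ioc 0 t, ∫⁻ v in Set.Ioc 0 u, G (u, v))
        + ∫⁻ u in Set.Ioc 0 t, ∫⁻ v in Set.Ioc u t, G (u, v) := by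
    have hsplit : ∀ u ∈ Set.Ioc (0:ℝ) t, (∫⁻ v in Set.Ioc 0 t, G (u, v))
        = (∫⁻ v in Set.Ioc 0 u, G (u, v)) + ∫⁻ v in Set.Ioc u t, G (u, v) := by
      intro u hu
      rw [← Set.Ioc_union_Ioc_eq_Ioc hu.1.le hu.2,
        lintegral_union measurableSet_Ioc (Set.Ioc_disjoint_Ioc_of_le le_rfl)]
    calc (∫⁻ u in Set.Ioc 0 t, ∫⁻ v in Set.Ioc 0 t, G (u, v))
        = ∫⁻ u in Set.Ioc 0 t,
            ((∫⁻ v in Set.Ioc 0 u, G (u, v)) + ∫⁻ v in Set.Ioc u t, G (u, v)) :=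
          setLIntegral_congr_fun measurableSet_Ioc (fun u hu => hsplit u hu)
      _ = _ := lintegral_add_left measA _
  -- swap the order of integration for the upper triangle
  have hS : MeasurableSet {p : ℝ × ℝ | 0 < p.1 ∧ p.1 < p.2 ∧ p.2 ≤ t} :=
    (measurableSet_lt measurable_const measurable_fst).inter
      ((measurableSet_lt measurable_fst measurable_snd).inter
        (measurableSet_le measurable_snd measurable_const))
  have J2eq : (∫⁻ u in Set.Ioc 0 t, ∫⁻ v in Set.Ioc u t, G (u, v))
      = ∫⁻ v in Set.Ioc 0 t, ∫⁻ u in Set.Ioo 0 v, G (u, v) := by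
    set W : ℝ × ℝ → ℝ≥0∞ := ({p : ℝ × ℝ | 0 < p.1 ∧ p.1 < p.2 ∧ p.2 ≤ t}).indicator G
      with hWdef
    have hW : Measurable W := hmG.indicator hS
    have inner_eq : ∀ u ∈ Set.Ioc (0:ℝ) t,
        (∫⁻ v in Set.Ioc u t, G (u, v)) = ∫⁻ v, W (u, v) := by
      intro u hu
      simp only [hWdef]
      rw [← lintegral_indicator measurableSet_Ioc]
      refine lintegral_congr fun v => ?_
      by_cases hv : v ∈ Set.Ioc u t
      · rw [Set.indicator_of_mem hv, Set.indicator_of_mem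
          (show (u, v) ∈ {p : ℝ × ℝ | 0 < p.1 ∧ p.1 < p.2 ∧ p.2 ≤ t} from ⟨hu.1, hv.1, hv.2⟩)]
      · rw [Set.indicator_of_notMem hv, Set.indicator_of_notMem
          (fun hmem : (u, v) ∈ {p : ℝ × ℝ | 0 < p.1 ∧ p.1 < p.2 ∧ p.2 ≤ t} =>
            hv ⟨hmem.2.1, hmem.2.2⟩)]
    have outer_zero : ∀ u : ℝ, u ∉ Set.Ioc (0:ℝ) t → (∫⁻ v, W (u, v)) = 0 := by
      intro u hu
      have hz : ∀ v : ℝ, W (u, v) = 0 := by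
        intro v
        simp only [hWdef]
        exact Set.indicator_of_notMem
          (fun hmem : (u, v) ∈ {p : ℝ × ℝ | 0 < p.1 ∧ p.1 < p.2 ∧ p.2 ≤ t} =>
            hu ⟨hmem.1, le_trans hmem.2.1.le hmem.2.2⟩) _
      simp only [hz, lintegral_zero]
    have inner_eq2 : ∀ v ∈ Set.Ioc (0:ℝ) t,
        (∫⁻ u, W (u, v)) = ∫⁻ u in Set.Ioo 0 v, G (u, v) := by
      intro v hv
      simp only [hWdef]
      rw [← lintegral_indicator measurableSet_Ioo]
      refine lintegral_congr fun u => ?_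
      by_cases hu : u ∈ Set.Ioo 0 v
      · rw [Set.indicator_of_mem
          (show (u, v) ∈ {p : ℝ × ℝ | 0 < p.1 ∧ p.1 < p.2 ∧ p.2 ≤ t} from ⟨hu.1, hu.2, hv.2⟩),
          Set.indicator_of_mem hu]
      · rw [Set.indicator_of_notMem
          (fun hmem : (u, v) ∈ {p : ℝ × ℝ | 0 < p.1 ∧ p.1 < p.2 ∧ p.2 ≤ t} =>
            hu ⟨hmem.1, hmem.2.1⟩), Set.indicator_of_notMem hu]
    have outer_zero2 : ∀ v : ℝ, v ∉ Set.Ioc (0:ℝ) t → (∫⁻ u, W (u, v)) = 0 := by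
      intro v hv
      have hz : ∀ u : ℝ, W (u, v) = 0 := by
        intro u
        simp only [hWdef]
        exact Set.indicator_of_notMem
          (fun hmem : (u, v) ∈ {p : ℝ × ℝ | 0 < p.1 ∧ p.1 < p.2 ∧ p.2 ≤ t} =>
            hv ⟨lt_trans hmem.1 hmem.2.1, hmem.2.2⟩) _
      simp only [hz, lintegral_zero]
    calc (∫⁻ u in Set.Ioc 0 t, ∫⁻ v in Set.Ioc u t, G (u, v))
        = ∫⁻ u in Set.Ioc 0 t, ∫⁻ v, W (u, v) :=
          setLIntegral_congr_fun measurableSet_Ioc (fun u hu => inner_eq u hu)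
      _ = ∫⁻ u, ∫⁻ v, W (u, v) := by
          rw [← lintegral_indicator measurableSet_Ioc]
          refine lintegral_congr fun u => ?_
          by_cases hu : u ∈ Set.Ioc (0:ℝ) t
          · rw [Set.indicator_of_mem hu]
          · rw [Set.indicator_of_notMem hu, outer_zero u hu]
      _ = ∫⁻ v, ∫⁻ u, W (u, v) := lintegral_lintegral_swap hW.aemeasurable
      _ = ∫⁻ v in Set.Ioc 0 t, ∫⁻ u, W (u, v) := by
          rw [← lintegral_indicator measurableSet_Ioc]
          refine lintegral_congr fun v => ?_
          by_cases hv : v ∈ Set.Ioc (0:ℝ) t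
          · rw [Set.indicator_of_mem hv]
          · rw [Set.indicator_of_notMem hv, outer_zero2 v hv]
      _ = ∫⁻ v in Set.Ioc 0 t, ∫⁻ u in Set.Ioo 0 v, G (u, v) :=
          setLIntegral_congr_fun measurableSet_Ioc (fun v hv => inner_eq2 v hv)
  -- bound the two triangle integrals
  have J1le : (∫⁻ u in Set.Ioc 0 t, ∫⁻ v in Set.Ioc 0 u, G (u, v)) ≤ K := by
    calc (∫⁻ u in Set.Ioc 0 t, ∫⁻ v in Set.Ioc 0 u, G (u, v))
        ≤ ∫⁻ u in Set.Ioc 0 t,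
            fE (t - u) * (ENNReal.ofReal (H * (2*H-1)) * ENNReal.ofReal γval) :=
          lintegral_mono fun u => Abound u
      _ = (∫⁻ u in Set.Ioc 0 t, fE (t - u)) *
            (ENNReal.ofReal (H * (2*H-1)) * ENNReal.ofReal γval) :=
          lintegral_mul_const' _ _ hKne
      _ ≤ K := by rw [hK]; exact mul_le_mul_left Ebound _
  have J2le : (∫⁻ u in Set.Ioc 0 t, ∫⁻ v in Set.Ioc u t, G (u, v)) ≤ K := by
    rw [J2eq]
    calc (∫⁻ v in Set.Ioc 0 t, ∫⁻ u in Set.Ioo 0 v, G (u, v))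
        ≤ ∫⁻ v in Set.Ioc 0 t,
            fE (t - v) * (ENNReal.ofReal (H * (2*H-1)) * ENNReal.ofReal γval) :=
          lintegral_mono fun v =>
            (lintegral_mono_set Set.Ioo_subset_Ioc_self).trans (Bbound v)
      _ = (∫⁻ v in Set.Ioc 0 t, fE (t - v)) *
            (ENNReal.ofReal (H * (2*H-1)) * ENNReal.ofReal γval) :=
          lintegral_mul_const' _ _ hKne
      _ ≤ K := by rw [hK]; exact mul_le_mul_left Ebound _
  -- the real constant
  set r : ℝ := (1/(2*lam)) * ((H * (2*H-1)) * γval) with hr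
  have hr0 : 0 ≤ r := by
    rw [hr]
    exact mul_nonneg (by positivity) (mul_nonneg hc0.le hγval0)
  have hKr : K = ENNReal.ofReal r := by
    rw [hK, hr, ← ENNReal.ofReal_mul hc0.le, ← ENNReal.ofReal_mul (by positivity)]
  -- pass to the Lebesgue integral
  simp only [intervalIntegral.integral_of_le ht]
  have main : (∫ u in Set.Ioc 0 t, ∫ v in Set.Ioc 0 t,
      Real.exp (-lam * (t - u)) * Real.exp (-lam * (t - v)) *
        (H * (2 * H - 1) * |u - v| ^ (2 * H - 2))) ≤ r + r := by
    have ofR : ENNReal.ofReal (∫ u in Set.Ioc 0 t, ∫ v in Set.Ioc 0 t,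
        Real.exp (-lam * (t - u)) * Real.exp (-lam * (t - v)) *
          (H * (2 * H - 1) * |u - v| ^ (2 * H - 2))) ≤ ENNReal.ofReal (r + r) := by
      calc ENNReal.ofReal (∫ u in Set.Ioc 0 t, ∫ v in Set.Ioc 0 t,
            Real.exp (-lam * (t - u)) * Real.exp (-lam * (t - v)) *
              (H * (2 * H - 1) * |u - v| ^ (2 * H - 2)))
          ≤ ∫⁻ u in Set.Ioc 0 t, ENNReal.ofReal (∫ v in Set.Ioc 0 t,
              Real.exp (-lam * (t - u)) * Real.exp (-lam * (t - v)) *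
                (H * (2 * H - 1) * |u - v| ^ (2 * H - 2))) :=
            ofReal_integral_le' _ (fun u => integral_nonneg fun v => hnn u v)
        _ ≤ ∫⁻ u in Set.Ioc 0 t, ∫⁻ v in Set.Ioc 0 t, G (u, v) :=
            lintegral_mono fun u => ofReal_integral_le' _ (fun v => hnn u v)
        _ = (∫⁻ u in Set.Ioc 0 t, ∫⁻ v in Set.Ioc 0 u, G (u, v))
              + ∫⁻ u in Set.Ioc 0 t, ∫⁻ v in Set.Ioc u t, G (u, v) := splitJ
        _ ≤ K + K := add_le_add J1le J2le
        _ = ENNReal.ofReal (r + r) := by rw [hKr, ENNReal.ofReal_add hr0 hr0]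
    exact (ENNReal.ofReal_le_ofReal_iff (by linarith)).1 ofR
  -- final arithmetic
  have hll : lam ^ (2*H : ℝ) * (1/lam) ^ (2*H : ℝ) = 1 := by
    rw [← Real.mul_rpow hlam.le (by positivity), mul_one_div_cancel hlam.ne', Real.one_rpow]
  have hG2 : Real.Gamma (2*H) = (2*H-1) * Real.Gamma (2*H-1) := by
    have h := Real.Gamma_add_one hexp.ne'
    rw [show (2*H-1+1 : ℝ) = 2*H by ring] at h
    exact h
  have key2 : r + r = H * Real.Gamma (2*H) * ((1/lam) ^ (2*H : ℝ)) := by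
    have e1 : (1/lam : ℝ) ^ (2*H : ℝ) = (1/lam) * (1/lam) ^ (2*H-1 : ℝ) := by
      have h := Real.rpow_add (show (0:ℝ) < 1/lam by positivity) 1 (2*H-1)
      rw [Real.rpow_one, show (1 + (2*H-1) : ℝ) = 2*H by ring] at h
      exact h
    rw [hr, hγval, e1, hG2]
    set X : ℝ := (1/lam : ℝ) ^ (2*H-1 : ℝ) with hX
    field_simp
    ring
  have harith : lam ^ (2*H) * (r + r) = H * Real.Gamma (2*H) := by
    rw [key2, show lam ^ (2*H) * (H * Real.Gamma (2*H) * (1/lam) ^ (2*H : ℝ))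
      = (lam ^ (2*H : ℝ) * (1/lam) ^ (2*H : ℝ)) * (H * Real.Gamma (2*H)) by ring,
      hll, one_mul]
  calc lam ^ (2*H) * (∫ u in Set.Ioc 0 t, ∫ v in Set.Ioc 0 t,
        Real.exp (-lam * (t - u)) * Real.exp (-lam * (t - v)) *
          (H * (2 * H - 1) * |u - v| ^ (2 * H - 2)))
      ≤ lam ^ (2*H) * (r + r) :=
        mul_le_mul_of_nonneg_left main (Real.rpow_pos_of_pos hlam _).le
    _ = H * Real.Gamma (2*H) := harith
end

section
/- Let $H \in (\frac12, 1)$ and $\varepsilon \in (0, 2H - \frac12)$. There exists a constant $C > 0$ depending only on $H$ and $\varepsilon$ such that for every $\tau \ge 0$, $$\sum_{k=1}^{\infty} (k^2\pi^2)^{-2H} \left( 1 - e^{-k^2\pi^2 \tau} \right)^2 \le C\, \tau^{\,2H - \frac12 - \varepsilon}.$$ -/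
open Real

/-- Deterministic series bound for the time-increment term of the stochastic convolution:
for `H ∈ (1/2, 1)` and `ε ∈ (0, 2H - 1/2)` there is `C > 0` such that for all `τ ≥ 0`,
`∑_{k ≥ 1} (k²π²)^{-2H} (1 - e^{-k²π²τ})² ≤ C τ^{2H - 1/2 - ε}`. -/
theorem stmt_9 (H ε : ℝ) (hH : H ∈ Set.Ioo (1/2 : ℝ) 1)
    (hε : ε ∈ Set.Ioo (0 : ℝ) (2 * H - 1/2)) :
    ∃ C : ℝ, 0 < C ∧ ∀ τ : ℝ, 0 ≤ τ →
      ∑' k : ℕ+, (((k : ℝ) ^ 2 * π ^ 2) ^ (-(2 * H))) *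
          (1 - Real.exp (-((k : ℝ) ^ 2 * π ^ 2) * τ)) ^ 2
        ≤ C * τ ^ (2 * H - 1/2 - ε) := by
  obtain ⟨hH1, hH2⟩ := hH
  obtain ⟨hε1, hε2⟩ := hε
  have hπ := Real.pi_pos
  set a : ℝ := 2 * H - 1/2 - ε with ha
  have ha0 : 0 < a := by rw [ha]; linarith
  have ha2 : a ≤ 2 := by rw [ha]; linarith
  -- the elementary bound (1 - e^{-x})² ≤ x^a for x ≥ 0
  have hsq : ∀ x : ℝ, 0 ≤ x → (1 - Real.exp (-x)) ^ 2 ≤ x ^ a := by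
    intro x hx
    rcases eq_or_lt_of_le hx with h0 | h0
    · rw [← h0]; simp [Real.zero_rpow ha0.ne']
    have hnn : 0 ≤ 1 - Real.exp (-x) := by
      have : Real.exp (-x) ≤ 1 := Real.exp_le_one_iff.mpr (by linarith)
      linarith
    rcases le_total x 1 with hx1 | hx1
    · have h1 : 1 - Real.exp (-x) ≤ x := by
        have := Real.add_one_le_exp (-x); linarith
      calc (1 - Real.exp (-x)) ^ 2 ≤ x ^ 2 := by nlinarith
        _ = x ^ (2:ℝ) := by rw [← Real.rpow_natCast x 2]; norm_num
        _ ≤ x ^ a := Real.rpow_le_rpow_of_exponent_ge h0 hx1 ha2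
    · have h1 : 1 - Real.exp (-x) ≤ 1 := by
        have := Real.exp_pos (-x); linarith
      calc (1 - Real.exp (-x)) ^ 2 ≤ 1 := by nlinarith
        _ ≤ x ^ a := Real.one_le_rpow hx1 ha0.le
  -- pointwise bound
  have hpt : ∀ l : ℝ, 0 < l → ∀ τ : ℝ, 0 ≤ τ →
      l ^ (-(2*H)) * (1 - Real.exp (-l * τ)) ^ 2 ≤ l ^ (-(1/2+ε)) * τ ^ a := by
    intro l hl τ hτ
    have h1 : (1 - Real.exp (-l * τ)) ^ 2 ≤ (l * τ) ^ a := by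
      have := hsq (l * τ) (by positivity)
      rwa [← neg_mul] at this
    calc l ^ (-(2*H)) * (1 - Real.exp (-l * τ)) ^ 2
        ≤ l ^ (-(2*H)) * (l * τ) ^ a :=
          mul_le_mul_of_nonneg_left h1 (Real.rpow_nonneg hl.le _)
      _ = l ^ (-(1/2+ε)) * τ ^ a := by
          rw [Real.mul_rpow hl.le hτ, ← mul_assoc, ← Real.rpow_add hl]
          congr 2
          rw [ha]; ring
  -- summability of the comparison series
  have hexp : (-(1+2*ε) : ℝ) < -1 := by linarith
  have hsumN : Summable (fun n : ℕ => (n:ℝ) ^ (-(1+2*ε))) :=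
    Real.summable_nat_rpow.mpr hexp
  have hgeq : ∀ k : ℕ+, ((k:ℝ)^2 * π^2) ^ (-(1/2+ε))
      = π ^ (-(1+2*ε)) * ((k:ℕ):ℝ) ^ (-(1+2*ε)) := by
    intro k
    have hk : (0:ℝ) < (k:ℝ) := by exact_mod_cast k.pos
    rw [Real.mul_rpow (by positivity) (by positivity),
        ← Real.rpow_natCast (k:ℝ) 2, ← Real.rpow_natCast π 2,
        ← Real.rpow_mul hk.le, ← Real.rpow_mul hπ.le, mul_comm]
    norm_num
    ring_nf
  have hsumg : Summable (fun k : ℕ+ => ((k:ℝ)^2 * π^2) ^ (-(1/2+ε))) := by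
    have h1 : Summable (fun k : ℕ+ => π ^ (-(1+2*ε)) * ((k:ℕ):ℝ) ^ (-(1+2*ε))) :=
      (hsumN.comp_injective PNat.coe_injective).mul_left _
    exact h1.congr fun k => (hgeq k).symm
  refine ⟨∑' k : ℕ+, ((k:ℝ)^2 * π^2) ^ (-(1/2+ε)), ?_, ?_⟩
  · have hk1 : ((1:ℕ+):ℝ)^2 * π^2 > 0 := by norm_num; positivity
    exact Summable.tsum_pos hsumg
      (fun k => by
        have hk : (0:ℝ) < (k:ℝ) := by exact_mod_cast k.pos
        exact (Real.rpow_pos_of_pos (by positivity) _).le)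
      1 (Real.rpow_pos_of_pos hk1 _)
  · intro τ hτ
    have hbd : ∀ k : ℕ+, ((k:ℝ)^2 * π^2) ^ (-(2*H)) *
        (1 - Real.exp (-((k:ℝ)^2 * π^2) * τ)) ^ 2
        ≤ ((k:ℝ)^2 * π^2) ^ (-(1/2+ε)) * τ ^ a := by
      intro k
      have hk : (0:ℝ) < (k:ℝ) := by exact_mod_cast k.pos
      exact hpt _ (by positivity) τ hτ
    calc ∑' k : ℕ+, ((k:ℝ)^2 * π^2) ^ (-(2*H)) *
          (1 - Real.exp (-((k:ℝ)^2 * π^2) * τ)) ^ 2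
        ≤ ∑' k : ℕ+, ((k:ℝ)^2 * π^2) ^ (-(1/2+ε)) * τ ^ a :=
          Summable.tsum_le_tsum hbd
            (Summable.of_nonneg_of_le (fun k => by positivity) hbd (hsumg.mul_right _))
            (hsumg.mul_right _)
      _ = (∑' k : ℕ+, ((k:ℝ)^2 * π^2) ^ (-(1/2+ε))) * τ ^ a := tsum_mul_right
end
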